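/- arXiv:1109.2161 — 10 statements merged into one kernel-verified Lean document; each statement's English description precedes it below -/
import Mathlib

section
/- Fix L ∈ ℕ₀, a commutative ring R with unit, a tuple m = (m_0,…,m_L) ∈ R^{L+1}, a topological space X, and a family of homeomorphisms Θ_{L,n,i} : Δ_n → Δ_n (n ∈ ℕ₀, i ∈ {0,…,L}). Assume that for every n ≥ 1, all i,k ∈ {0,…,L}, and all j,p ∈ {0,…,n} with j ≤ p, the equality EQUATION_{n,j≤p,i,k} holds. Then for every n ∈ ℕ₀ and every continuous map T : Δ_{n+1} → X one has ∂_n(∂_{n+1}(T)) = 0 in F(R)_n(X). -/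
open scoped BigOperators

noncomputable section

/-- `Spx k` is the standard simplex on `k` coordinates, i.e. the standard simplex
`Δ_{k-1}` of the paper, as a subspace of `ℝ^k`. -/
abbrev Spx (k : ℕ) : Type := {x : Fin k → ℝ // x ∈ stdSimplex ℝ (Fin k)}

/-- the value `v = i/((L+1)(n+1))` inserted by the face map `⟨·⟩_{L,n,i,j}`. -/
def vval (L n : ℕ) (i : Fin (L+1)) : ℝ := (i : ℝ) / (((L:ℝ)+1) * ((n:ℝ)+1))

lemma vval_nonneg (L n : ℕ) (i : Fin (L+1)) : 0 ≤ vval L n i := by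
  unfold vval; positivity

lemma vval_lt_one (L n : ℕ) (i : Fin (L+1)) : vval L n i < 1 := by
  unfold vval
  rw [div_lt_one (by positivity)]
  have h1 : (i : ℝ) < (L:ℝ)+1 := by exact_mod_cast i.isLt
  have h2 : ((L:ℝ)+1) ≤ ((L:ℝ)+1) * ((n:ℝ)+1) := by
    nlinarith [Nat.cast_nonneg (α := ℝ) L, Nat.cast_nonneg (α := ℝ) n]
  linarith

/-- the underlying function of the face map `⟨id⟩_{L,n,i,j} : Δ_{n-1} → Δ_n`:
insert the value `v` at position `j` and rescale the remaining coordinates by `1 - v`. -/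
def faceFun (L n : ℕ) (i : Fin (L+1)) (j : Fin (n+1)) (x : Fin n → ℝ) : Fin (n+1) → ℝ :=
  j.insertNth (vval L n i) (fun k => (1 - vval L n i) * x k)

lemma faceFun_mem (L n : ℕ) (i : Fin (L+1)) (j : Fin (n+1)) {x : Fin n → ℝ}
    (hx : x ∈ stdSimplex ℝ (Fin n)) :
    faceFun L n i j x ∈ stdSimplex ℝ (Fin (n+1)) := by
  constructor
  · intro m
    rcases eq_or_ne m j with rfl | h
    · simpa [faceFun] using vval_nonneg L n i
    · obtain ⟨k, rfl⟩ := Fin.exists_succAbove_eq h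
      simp only [faceFun, Fin.insertNth_apply_succAbove]
      exact mul_nonneg (by linarith [vval_lt_one L n i]) (hx.1 k)
  · rw [Fin.sum_univ_succAbove _ j]
    simp only [faceFun, Fin.insertNth_apply_same, Fin.insertNth_apply_succAbove]
    rw [← Finset.mul_sum, hx.2]
    ring

/-- the face map `⟨id⟩_{L,n,i,j} : Δ_{n-1} → Δ_n` as a continuous map. -/
def faceCM (L n : ℕ) (i : Fin (L+1)) (j : Fin (n+1)) : C(Spx n, Spx (n+1)) where
  toFun x := ⟨faceFun L n i j x.1, faceFun_mem L n i j x.2⟩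
  continuous_toFun := by
    refine Continuous.subtype_mk ?_ _
    refine continuous_pi fun m => ?_
    rcases eq_or_ne m j with rfl | h
    · simpa [faceFun] using (continuous_const : Continuous fun _ : Spx n => vval L n i)
    · obtain ⟨k, rfl⟩ := Fin.exists_succAbove_eq h
      simp only [faceFun, Fin.insertNth_apply_succAbove]
      exact continuous_const.mul ((continuous_apply k).comp continuous_subtype_val)

open Fin.NatCast in
/-- `EQUATION_{n,j≤p,i,k}` of the paper, where `n = n'+1 ≥ 1`: the equality of the
two composite maps `Δ_{n-1} → Δ_{n+1}`, namely
`⟨id⟩_{L,n+1,i,j} ∘ Θ_{L,n,i} ∘ ⟨id⟩_{L,n,k,p} ∘ Θ_{L,n-1,k}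
  = ⟨id⟩_{L,n+1,k,p+1} ∘ Θ_{L,n,k} ∘ ⟨id⟩_{L,n,i,j} ∘ Θ_{L,n-1,i}`. -/
def EquationHolds (L : ℕ)
    (Θ : ∀ n : ℕ, Fin (L+1) → (Spx (n+1) ≃ₜ Spx (n+1)))
    (n' : ℕ) (i k : Fin (L+1)) (j p : Fin (n'+2)) : Prop :=
  ∀ x : Spx (n'+1),
    faceCM L (n'+2) i j.castSucc ((Θ (n'+1) i) (faceCM L (n'+1) k p ((Θ n' k) x))) =
    faceCM L (n'+2) k p.succ ((Θ (n'+1) k) (faceCM L (n'+1) i ((j.castSucc : ℕ) : Fin (n'+1+1)) ((Θ n' i) x)))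

variable (R : Type) [CommRing R] (X : Type) [TopologicalSpace X]

/-- `Chains R X k` is the module `F(R)_{k-1}(X)` of the paper; in particular
`Chains R X 0 = F(R)_{-1}(X)` is the zero module, and `Chains R X (n+1) = F(R)_n(X)`
is the free `R`-module on the set of continuous maps `Δ_n → X`. -/
def Chains : ℕ → Type
  | 0 => PUnit
  | (n+1) => C(Spx (n+1), X) →₀ R

instance : ∀ k, AddCommGroup (Chains R X k)
  | 0 => inferInstanceAs (AddCommGroup PUnit)
  | (n+1) => inferInstanceAs (AddCommGroup (C(Spx (n+1), X) →₀ R))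

instance (priority := 10000) : ∀ k, Module R (Chains R X k)
  | 0 => inferInstanceAs (Module R PUnit)
  | (n+1) => inferInstanceAs (Module R (C(Spx (n+1), X) →₀ R))

variable {X}

/-- the continuous map `⟨T⟩_{L,n+1,i,j} ∘ Θ_{L,n,i} : Δ_n → X`, for `T : Δ_{n+1} → X`. -/
def chainFace (L : ℕ) (Θ : ∀ n : ℕ, Fin (L+1) → (Spx (n+1) ≃ₜ Spx (n+1))) (n : ℕ)
    (T : C(Spx (n+2), X)) (i : Fin (L+1)) (j : Fin (n+2)) : C(Spx (n+1), X) :=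
  (T.comp (faceCM L (n+1) i j)).comp (Θ n i : C(Spx (n+1), Spx (n+1)))

variable (X)

/-- the boundary operator `∂_{n+1} : F(R)_{n+1}(X) → F(R)_n(X)` of the paper:
`∂(T) = Σ_j (-1)^j Σ_i m_i • [⟨T⟩_{L,n+1,i,j} ∘ Θ_{L,n,i}]` on basis elements. -/
def bddry (L : ℕ) (m : Fin (L+1) → R)
    (Θ : ∀ n : ℕ, Fin (L+1) → (Spx (n+1) ≃ₜ Spx (n+1))) (n : ℕ) :
    (C(Spx (n+2), X) →₀ R) →ₗ[R] (C(Spx (n+1), X) →₀ R) :=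
  Finsupp.lift _ R _ (fun T => ∑ j : Fin (n+2), ∑ i : Fin (L+1),
    ((-1 : R)^(j : ℕ) * m i) • Finsupp.single (chainFace L Θ n T i j) (1 : R))

/-- the full family of boundary operators `∂_k : F(R)_k(X) → F(R)_{k-1}(X)`
of the paper, with `∂_0 = 0`. -/
def paperBoundary (L : ℕ) (m : Fin (L+1) → R)
    (Θ : ∀ n : ℕ, Fin (L+1) → (Spx (n+1) ≃ₜ Spx (n+1))) :
    ∀ k, Chains R X (k+1) →ₗ[R] Chains R X k
  | 0 => 0
  | (n+1) => bddry R X L m Θ n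

/-! Expanding `∂ ∂ T` gives an alternating double sum over the face indices `(j, p)` whose
`(j, p)` term is `∑_{i,k} m_i m_k [⟨⟨T⟩_{i,j} ∘ Θ_i⟩_{k,p} ∘ Θ_k]`. For `j ≤ p` the equations
`EQUATION_{n,j≤p,i,k}` identify it, after exchanging `i` and `k`, with the `(p + 1, j)` term, which
carries the opposite sign; so the terms cancel in pairs, as in the proof of `d ∘ d = 0` for a
simplicial object. -/

namespace Fin

def faceIndexSwap (n : ℕ) (x : Fin (n+2) × Fin (n+1)) : Fin (n+2) × Fin (n+1) :=
  if h : (x.1 : ℕ) ≤ x.2 then (x.2.succ, x.1.castLT (by omega))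
  else (x.2.castSucc, x.1.pred (by rintro h0; simp [h0] at h))

lemma faceIndexSwap_involutive (n : ℕ) : Function.Involutive (faceIndexSwap n) := by
  rintro ⟨j, p⟩
  by_cases h : (j : ℕ) ≤ p
  · simp [faceIndexSwap, h]
  · have h' : (p : ℕ) ≤ j - 1 := by omega
    simp [faceIndexSwap, h, h']

lemma faceIndexSwap_ne (n : ℕ) (x : Fin (n+2) × Fin (n+1)) : faceIndexSwap n x ≠ x := by
  obtain ⟨j, p⟩ := x
  by_cases h : (j : ℕ) ≤ p <;> simp [faceIndexSwap, h, Fin.ext_iff] <;> omega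

lemma faceIndexSwap_castSucc {n : ℕ} {j p : Fin (n+1)} (h : j ≤ p) :
    faceIndexSwap n (j.castSucc, p) = (p.succ, j) := by
  simp [faceIndexSwap, Fin.le_def.mp h]

lemma exists_eq_castSucc_or_eq_succ {n : ℕ} (x : Fin (n+2) × Fin (n+1)) :
    ∃ j p : Fin (n+1), j ≤ p ∧ (x = (j.castSucc, p) ∨ x = (p.succ, j)) := by
  obtain ⟨j, p⟩ := x
  by_cases h : (j : ℕ) ≤ p
  · exact ⟨j.castLT (by omega), p, Fin.le_def.mpr h, .inl (by simp)⟩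
  · obtain ⟨q, rfl⟩ := (Fin.exists_succ_eq (x := j)).mpr (by rintro rfl; simp at h)
    exact ⟨p, q, Fin.le_def.mpr (by simp at h; omega), .inr rfl⟩

theorem sum_sum_neg_one_pow_smul_eq_zero {R M : Type*} [Ring R] [AddCommGroup M] [Module R M]
    {n : ℕ} (f : Fin (n+2) → Fin (n+1) → M)
    (hf : ∀ j p : Fin (n+1), j ≤ p → f j.castSucc p = f p.succ j) :
    ∑ j : Fin (n+2), ∑ p : Fin (n+1), (-1 : R) ^ (j + p : ℕ) • f j p = 0 := by
  set g : Fin (n+2) × Fin (n+1) → M := fun x => (-1 : R) ^ (x.1 + x.2 : ℕ) • f x.1 x.2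
  have cancel_pair : ∀ j p : Fin (n+1), j ≤ p → g (j.castSucc, p) + g (p.succ, j) = 0 := by
    intro j p h
    simp only [g, Fin.val_castSucc, Fin.val_succ, hf j p h, ← add_smul]
    rw [show (p : ℕ) + 1 + j = j + p + 1 by omega, pow_succ, mul_neg_one, add_neg_cancel,
      zero_smul]
  have cancel : ∀ x, g x + g (faceIndexSwap n x) = 0 := by
    intro x
    obtain ⟨j, p, h, rfl | rfl⟩ := exists_eq_castSucc_or_eq_succ x
    · rw [faceIndexSwap_castSucc h]
      exact cancel_pair j p h
    · rw [← faceIndexSwap_castSucc h, faceIndexSwap_involutive, faceIndexSwap_castSucc h,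
        add_comm]
      exact cancel_pair j p h
  rw [← Finset.sum_product' (f := fun j p => g (j, p)), Finset.univ_product_univ]
  exact Finset.sum_involution (fun x _ => faceIndexSwap n x) (fun x _ => cancel x)
    (fun x _ _ => faceIndexSwap_ne n x) (fun _ _ => Finset.mem_univ _)
    (fun x _ => faceIndexSwap_involutive n x)

end Fin

section Boundary

variable {R : Type} [CommRing R] {X : Type} [TopologicalSpace X] {L : ℕ}
  (m : Fin (L+1) → R) (Θ : ∀ n : ℕ, Fin (L+1) → (Spx (n+1) ≃ₜ Spx (n+1)))

lemma chainFace_chainFace_of_equationHolds {n : ℕ} {i k : Fin (L+1)} {j p : Fin (n+2)}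
    (h : EquationHolds L Θ n i k j p) (T : C(Spx (n+3), X)) :
    chainFace L Θ n (chainFace L Θ (n+1) T i j.castSucc) k p =
      chainFace L Θ n (chainFace L Θ (n+1) T k p.succ) i j := by
  ext x
  have hx := h x
  simp only [Fin.val_castSucc, Fin.cast_val_eq_self] at hx
  exact congrArg T hx

lemma bddry_single (n : ℕ) (T : C(Spx (n+2), X)) :
    bddry R X L m Θ n (Finsupp.single T 1) = ∑ j : Fin (n+2), ∑ i : Fin (L+1),
      ((-1 : R) ^ (j : ℕ) * m i) • Finsupp.single (chainFace L Θ n T i j) 1 := by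
  simp [bddry]

def doubleFace (n : ℕ) (T : C(Spx (n+3), X)) (j : Fin (n+3)) (p : Fin (n+2)) :
    C(Spx (n+1), X) →₀ R :=
  ∑ i : Fin (L+1), ∑ k : Fin (L+1),
    (m i * m k) • Finsupp.single (chainFace L Θ n (chainFace L Θ (n+1) T i j) k p) 1

lemma bddry_bddry_single (n : ℕ) (T : C(Spx (n+3), X)) :
    bddry R X L m Θ n (bddry R X L m Θ (n+1) (Finsupp.single T 1)) =
      ∑ j : Fin (n+3), ∑ p : Fin (n+2), (-1 : R) ^ (j + p : ℕ) • doubleFace m Θ n T j p := by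
  simp only [bddry_single, map_sum, map_smul, doubleFace, Finset.smul_sum, smul_smul]
  refine Finset.sum_congr rfl fun j _ => ?_
  rw [Finset.sum_comm]
  refine Finset.sum_congr rfl fun p _ => Finset.sum_congr rfl fun i _ =>
    Finset.sum_congr rfl fun k _ => ?_
  rw [pow_add, mul_mul_mul_comm]

lemma doubleFace_castSucc {n : ℕ} (T : C(Spx (n+3), X)) {j p : Fin (n+2)}
    (h : ∀ i k, EquationHolds L Θ n i k j p) :
    doubleFace m Θ n T j.castSucc p = doubleFace m Θ n T p.succ j := by
  unfold doubleFace
  rw [Finset.sum_comm]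
  refine Finset.sum_congr rfl fun i _ => Finset.sum_congr rfl fun k _ => ?_
  rw [chainFace_chainFace_of_equationHolds Θ (h k i), mul_comm]

end Boundary

theorem boundary_squared_eq_zero
    (L : ℕ) (R : Type) [CommRing R] (m : Fin (L+1) → R)
    (X : Type) [TopologicalSpace X]
    (Θ : ∀ n : ℕ, Fin (L+1) → (Spx (n+1) ≃ₜ Spx (n+1)))
    (hEq : ∀ (n' : ℕ) (i k : Fin (L+1)) (j p : Fin (n'+2)), j ≤ p →
      EquationHolds L Θ n' i k j p) :
    ∀ (n : ℕ) (T : C(Spx (n+2), X)),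
      paperBoundary R X L m Θ n
        (paperBoundary R X L m Θ (n+1) (Finsupp.single T 1)) = 0 := by
  rintro (_ | n) T
  · rfl
  · show bddry R X L m Θ n (bddry R X L m Θ (n+1) (Finsupp.single T 1)) = 0
    rw [bddry_bddry_single]
    exact Fin.sum_sum_neg_one_pow_smul_eq_zero _ fun j p h =>
      doubleFace_castSucc m Θ T fun i k => hEq n i k j p h

end
end

section
/- For every n ≥ 1 and all real numbers α, β with 0 < α < 1/(n+1) and 0 < β < 1/(n+1), the α-cross ♣_{n,α} is homeomorphic to the β-cross ♣_{n,β}. -/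
open scoped BigOperators

noncomputable section

lemma perm_mem {k : ℕ} (ϑ : Equiv.Perm (Fin k)) {x : Fin k → ℝ}
    (hx : x ∈ stdSimplex ℝ (Fin k)) :
    (fun i => x (ϑ i)) ∈ stdSimplex ℝ (Fin k) :=
  ⟨fun i => hx.1 (ϑ i), (Equiv.sum_comp ϑ x).trans hx.2⟩

/-- membership of `COMFORT (Δ_n)`: a self-homeomorphism of the standard simplex which
(i) respects coordinate permutations and (ii) keeps the order. -/
structure IsComfort {n : ℕ} (F : Spx (n+1) ≃ₜ Spx (n+1)) : Prop where
  perm : ∀ (ϑ : Equiv.Perm (Fin (n+1))) (x : Spx (n+1)),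
      ((F ⟨fun i => x.1 (ϑ i), perm_mem ϑ x.2⟩ : Spx (n+1)) : Fin (n+1) → ℝ)
        = fun i => (F x).1 (ϑ i)
  mono : ∀ (x : Spx (n+1)) (i j : Fin (n+1)), x.1 i ≤ x.1 j → (F x).1 i ≤ (F x).1 j

/-- the `α`-cross `♣_{n,α}` of `Δ_n`. -/
def cross (n : ℕ) (α : ℝ) : Set (Spx (n+1)) := {x | ∃ j, x.1 j = α}

/-- the boundary `BOU_n = ♣_{n,0}` of `Δ_n`. -/
def bou (n : ℕ) : Set (Spx (n+1)) := cross n 0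

/-- the barycenter `Center_n` of `Δ_n`. -/
def center (n : ℕ) : Spx (n+1) :=
  ⟨fun _ => 1/((n:ℝ)+1), by
    constructor
    · intro i
      positivity
    · rw [Finset.sum_const, Finset.card_univ, Fintype.card_fin, nsmul_eq_mul]
      push_cast
      field_simp⟩

/-- the minimal coordinate of a point of `Δ_n`. -/
def minCoord {n : ℕ} (x : Spx (n+1)) : ℝ :=
  Finset.univ.inf' Finset.univ_nonempty x.1

/-- the `α`-layer `Layer_{n,α}` of `Δ_n`. -/
def layer (n : ℕ) (α : ℝ) : Set (Spx (n+1)) := {x | minCoord x = α}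

/-- `Sponge (Δ_n)`: the points of `Δ_n` with pairwise distinct coordinates. -/
def sponge (n : ℕ) : Set (Spx (n+1)) := {x | ∀ i j, x.1 i = x.1 j → i = j}

/-!
Split every coordinate as `x j = min (x j) α + max (x j - α) 0`. Stretching the lower parts by
`β / α` and rescaling the upper parts by the common positive factor that restores the coordinate
sum `1` maps `Δ_n` into itself. The lower and upper parts of the image are the rescaled parts of
`x`, so the same recipe with `α` and `β` exchanged inverts the map; and a coordinate of the image
equals `β` exactly when the coordinate of `x` equals `α`, so the map restricts to the crosses.
-/

namespace CrossHomeo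

variable {ι : Type*} [Fintype ι] {a b : ℝ} {x : ι → ℝ}

def lowMass (a : ℝ) (x : ι → ℝ) : ℝ := ∑ j, min (x j) a

def highScale (a b : ℝ) (x : ι → ℝ) : ℝ := (1 - b / a * lowMass a x) / (1 - lowMass a x)

def rescale (a b : ℝ) (x : ι → ℝ) : ι → ℝ :=
  fun j => b / a * min (x j) a + highScale a b x * max (x j - a) 0

lemma lowMass_le_card_mul : lowMass a x ≤ Fintype.card ι * a := by
  calc lowMass a x ≤ ∑ _j : ι, a := Finset.sum_le_sum fun j _ => min_le_right _ _
    _ = Fintype.card ι * a := by simp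

lemma lowMass_lt_one (hka : Fintype.card ι * a < 1) : lowMass a x < 1 :=
  lowMass_le_card_mul.trans_lt hka

lemma div_mul_lowMass_lt_one (ha : 0 < a) (hb : 0 < b) (hkb : Fintype.card ι * b < 1) :
    b / a * lowMass a x < 1 :=
  calc b / a * lowMass a x ≤ b / a * (Fintype.card ι * a) := by
        gcongr
        exact lowMass_le_card_mul
    _ = Fintype.card ι * b := by field_simp
    _ < 1 := hkb

lemma highScale_pos (ha : 0 < a) (hb : 0 < b) (hka : Fintype.card ι * a < 1)
    (hkb : Fintype.card ι * b < 1) : 0 < highScale a b x :=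
  div_pos (sub_pos.2 (div_mul_lowMass_lt_one ha hb hkb)) (sub_pos.2 (lowMass_lt_one hka))

lemma min_add_max_sub (t a : ℝ) : min t a + max (t - a) 0 = t := by
  rcases le_total t a with h | h
  · rw [min_eq_left h, max_eq_right (by linarith), add_zero]
  · rw [min_eq_right h, max_eq_left (by linarith), add_sub_cancel]

lemma sum_max_sub (hx : ∑ j, x j = 1) : ∑ j, max (x j - a) 0 = 1 - lowMass a x := by
  rw [← hx, lowMass, ← Finset.sum_sub_distrib]
  exact Finset.sum_congr rfl fun j _ => eq_sub_of_add_eq' (min_add_max_sub (x j) a)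

lemma rescale_mem (ha : 0 < a) (hb : 0 < b) (hka : Fintype.card ι * a < 1)
    (hkb : Fintype.card ι * b < 1) (hx : x ∈ stdSimplex ℝ ι) :
    rescale a b x ∈ stdSimplex ℝ ι := by
  refine ⟨fun j => ?_, ?_⟩
  · have := highScale_pos (x := x) ha hb hka hkb
    have := hx.1 j
    unfold rescale
    positivity
  · have hM : 1 - lowMass a x ≠ 0 := (sub_pos.2 (lowMass_lt_one hka)).ne'
    simp only [rescale, Finset.sum_add_distrib, ← Finset.mul_sum, sum_max_sub hx.2]
    rw [highScale, div_mul_cancel₀ _ hM, ← lowMass]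
    ring

lemma rescale_apply_of_le {j : ι} (h : x j ≤ a) :
    rescale a b x j = b / a * x j := by
  rw [rescale, min_eq_left h, max_eq_right (by linarith), mul_zero, add_zero]

lemma rescale_apply_of_ge (ha : 0 < a) {j : ι} (h : a ≤ x j) :
    rescale a b x j = b + highScale a b x * (x j - a) := by
  rw [rescale, min_eq_right h, max_eq_left (by linarith), div_mul_cancel₀ _ ha.ne']

lemma div_mul_le_of_le (ha : 0 < a) (hb : 0 < b) {t : ℝ} (h : t ≤ a) : b / a * t ≤ b := by
  rw [div_mul_eq_mul_div, div_le_iff₀ ha]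
  exact mul_le_mul_of_nonneg_left h hb.le

lemma min_rescale (ha : 0 < a) (hb : 0 < b) (hka : Fintype.card ι * a < 1)
    (hkb : Fintype.card ι * b < 1) (j : ι) :
    min (rescale a b x j) b = b / a * min (x j) a := by
  rcases le_total (x j) a with h | h
  · rw [rescale_apply_of_le h, min_eq_left h, min_eq_left (div_mul_le_of_le ha hb h)]
  · have := highScale_pos (x := x) ha hb hka hkb
    rw [rescale_apply_of_ge ha h, min_eq_right h, div_mul_cancel₀ _ ha.ne',
      min_eq_right (by nlinarith)]

lemma max_rescale_sub (ha : 0 < a) (hb : 0 < b) (hka : Fintype.card ι * a < 1)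
    (hkb : Fintype.card ι * b < 1) (j : ι) :
    max (rescale a b x j - b) 0 = highScale a b x * max (x j - a) 0 := by
  rcases le_total (x j) a with h | h
  · have := div_mul_le_of_le ha hb h
    rw [rescale_apply_of_le h, max_eq_right (by linarith), max_eq_right (by linarith),
      mul_zero]
  · have := highScale_pos (x := x) ha hb hka hkb
    rw [rescale_apply_of_ge ha h, add_sub_cancel_left, max_eq_left (by nlinarith),
      max_eq_left (by nlinarith)]

lemma lowMass_rescale (ha : 0 < a) (hb : 0 < b) (hka : Fintype.card ι * a < 1)
    (hkb : Fintype.card ι * b < 1) : lowMass b (rescale a b x) = b / a * lowMass a x := by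
  rw [lowMass, lowMass, Finset.mul_sum]
  exact Finset.sum_congr rfl fun j _ => min_rescale ha hb hka hkb j

lemma highScale_rescale_mul (ha : 0 < a) (hb : 0 < b) (hka : Fintype.card ι * a < 1)
    (hkb : Fintype.card ι * b < 1) : highScale b a (rescale a b x) * highScale a b x = 1 := by
  have h₁ : 1 - lowMass a x ≠ 0 := (sub_pos.2 (lowMass_lt_one hka)).ne'
  have h₂ : 1 - b / a * lowMass a x ≠ 0 := (sub_pos.2 (div_mul_lowMass_lt_one ha hb hkb)).ne'
  have : a / b * (b / a * lowMass a x) = lowMass a x := by field_simp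
  rw [highScale, highScale, lowMass_rescale ha hb hka hkb, this, div_mul_div_comm, mul_comm,
    div_self (mul_ne_zero h₂ h₁)]

lemma rescale_rescale (ha : 0 < a) (hb : 0 < b) (hka : Fintype.card ι * a < 1)
    (hkb : Fintype.card ι * b < 1) : rescale b a (rescale a b x) = x := by
  funext j
  have hab : a / b * (b / a) = 1 := by field_simp
  calc rescale b a (rescale a b x) j
      = a / b * (b / a * min (x j) a)
        + highScale b a (rescale a b x) * (highScale a b x * max (x j - a) 0) := by
        rw [rescale, min_rescale ha hb hka hkb, max_rescale_sub ha hb hka hkb]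
    _ = min (x j) a + max (x j - a) 0 := by
        rw [← mul_assoc, ← mul_assoc, hab, highScale_rescale_mul ha hb hka hkb, one_mul, one_mul]
    _ = x j := min_add_max_sub _ _

lemma continuous_rescale (hka : Fintype.card ι * a < 1) : Continuous (rescale (ι := ι) a b) := by
  have hM : Continuous (lowMass (ι := ι) a) := by unfold lowMass; fun_prop
  have hs : Continuous (highScale (ι := ι) a b) :=
    (continuous_const.sub (continuous_const.mul hM)).div (continuous_const.sub hM)
      fun _ => (sub_pos.2 (lowMass_lt_one hka)).ne'
  unfold rescale
  fun_prop

lemma rescale_apply_eq_iff (ha : 0 < a) (hb : 0 < b) (hka : Fintype.card ι * a < 1)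
    (hkb : Fintype.card ι * b < 1) (j : ι) : rescale a b x j = b ↔ x j = a := by
  rcases le_or_gt (x j) a with h | h
  · rw [rescale_apply_of_le h, div_mul_eq_mul_div, div_eq_iff ha.ne',
      mul_right_inj' hb.ne']
  · have := highScale_pos (x := x) ha hb hka hkb
    rw [rescale_apply_of_ge ha h.le]
    constructor <;> intro <;> nlinarith

def rescaleHomeomorph (ha : 0 < a) (hb : 0 < b) (hka : Fintype.card ι * a < 1)
    (hkb : Fintype.card ι * b < 1) : stdSimplex ℝ ι ≃ₜ stdSimplex ℝ ι where
  toFun x := ⟨rescale a b x, rescale_mem ha hb hka hkb x.2⟩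
  invFun x := ⟨rescale b a x, rescale_mem hb ha hkb hka x.2⟩
  left_inv _ := Subtype.ext (rescale_rescale ha hb hka hkb)
  right_inv _ := Subtype.ext (rescale_rescale hb ha hkb hka)
  continuous_toFun := ((continuous_rescale hka).comp continuous_subtype_val).subtype_mk _
  continuous_invFun := ((continuous_rescale hkb).comp continuous_subtype_val).subtype_mk _

end CrossHomeo

lemma card_fin_mul_lt_one {n : ℕ} {a : ℝ} (h : a < 1 / ((n : ℝ) + 1)) :
    Fintype.card (Fin (n + 1)) * a < 1 := by
  rw [lt_div_iff₀ (by positivity)] at h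
  simpa [mul_comm] using h

open CrossHomeo in
theorem cross_homeomorphic_cross_general (n : ℕ) (α β : ℝ)
    (hα0 : 0 < α) (hα1 : α < 1/((n:ℝ)+1))
    (hβ0 : 0 < β) (hβ1 : β < 1/((n:ℝ)+1)) :
    Nonempty (↥(cross n α) ≃ₜ ↥(cross n β)) := by
  have hkα := card_fin_mul_lt_one hα1
  have hkβ := card_fin_mul_lt_one hβ1
  exact ⟨(rescaleHomeomorph hα0 hβ0 hkα hkβ).subtype fun x =>
    exists_congr fun j => (rescale_apply_eq_iff hα0 hβ0 hkα hkβ j).symm⟩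

theorem cross_homeomorphic_cross (n : ℕ) (hn : 1 ≤ n) (α β : ℝ)
    (hα0 : 0 < α) (hα1 : α < 1/((n:ℝ)+1))
    (hβ0 : 0 < β) (hβ1 : β < 1/((n:ℝ)+1)) :
    Nonempty (↥(cross n α) ≃ₜ ↥(cross n β)) :=
  cross_homeomorphic_cross_general n α β hα0 hα1 hβ0 hβ1

end
end

section
/- For every n ≥ 1 and every real number α with 0 ≤ α < 1/(n+1), the set Layer_{n,α} is homeomorphic to the (n−1)-dimensional sphere S^{n−1}. -/
/-!
Forgetting the last coordinate embeds `Δ_n` into `ℝⁿ` and carries `Layer_{n,α}` onto the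
frontier of the truncated simplex `{y | α ≤ yᵢ, ∑ yᵢ ≤ 1 - α}`. For `α < 1/(n+1)` this is
a bounded convex set with nonempty interior, and the gauge rescaling homeomorphism of `ℝⁿ`
maps its frontier onto the unit sphere.
-/

open scoped BigOperators

noncomputable section

open Set Function

lemma mem_layer_iff {n : ℕ} {α : ℝ} {x : Spx (n+1)} :
    x ∈ layer n α ↔ (∀ j, α ≤ x.1 j) ∧ ∃ j, x.1 j = α := by
  obtain ⟨j₀, -, hj₀⟩ := Finset.exists_mem_eq_inf' Finset.univ_nonempty x.1
  simp only [layer, minCoord, mem_ofPred_eq]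
  constructor
  · rintro rfl
    exact ⟨fun j => Finset.inf'_le _ (Finset.mem_univ j), j₀, hj₀.symm⟩
  · rintro ⟨hle, j, rfl⟩
    exact le_antisymm (Finset.inf'_le _ (Finset.mem_univ j))
      (Finset.le_inf' _ _ fun i _ => hle i)

/-- The image of `{x ∈ Δ_n | α ≤ minCoord x}` under the chart forgetting the last coordinate. -/
def truncatedSimplex (n : ℕ) (α : ℝ) : Set (EuclideanSpace ℝ (Fin n)) :=
  {y | (∀ i, α ≤ y i) ∧ ∑ i, y i ≤ 1 - α}

section truncatedSimplex

variable {n : ℕ} {α : ℝ}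

lemma isClosed_truncatedSimplex : IsClosed (truncatedSimplex n α) := by
  simp only [truncatedSimplex, ofPred_and, ofPred_forall]
  exact (isClosed_iInter fun i => isClosed_le continuous_const (PiLp.continuous_apply 2 _ i))
    |>.inter (isClosed_le (by fun_prop) continuous_const)

lemma convex_truncatedSimplex : Convex ℝ (truncatedSimplex n α) := by
  simp only [truncatedSimplex, ofPred_and, ofPred_forall]
  have hsum : IsLinearMap ℝ fun y : EuclideanSpace ℝ (Fin n) => ∑ i, y i :=
    ⟨fun x y => by simp [Finset.sum_add_distrib], fun c x => by simp [Finset.mul_sum]⟩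
  exact (convex_iInter fun i => convex_halfSpace_ge (EuclideanSpace.proj i).toLinearMap.isLinear α)
    |>.inter (convex_halfSpace_le hsum (1 - α))

lemma isBounded_truncatedSimplex : Bornology.IsBounded (truncatedSimplex n α) := by
  refine ((isCompact_Icc (a := fun _ : Fin n => α) (b := fun _ => 1 - n * α)).image
    (PiLp.continuous_toLp 2 _)).isBounded.subset
    fun y ⟨hα, hsum⟩ => ⟨WithLp.ofLp y, ⟨hα, fun i => ?_⟩, rfl⟩
  have hi : y i - α ≤ ∑ j, (y j - α) :=
    Finset.single_le_sum (f := fun j => y j - α) (fun j _ => sub_nonneg.2 (hα j))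
      (Finset.mem_univ i)
  simp only [Finset.sum_sub_distrib, Finset.sum_const, Finset.card_univ, Fintype.card_fin,
    nsmul_eq_mul] at hi
  show y i ≤ 1 - n * α
  linarith

lemma interior_truncatedSimplex (hn : 0 < n) :
    interior (truncatedSimplex n α) = {y | (∀ i, α < y i) ∧ ∑ i, y i < 1 - α} := by
  have hcoord (i : Fin n) : interior {y : EuclideanSpace ℝ (Fin n) | α ≤ y i} = {y | α < y i} := by
    have := (PiLp.isOpenMap_apply 2 (fun _ : Fin n => ℝ) i)
      |>.preimage_interior_eq_interior_preimage (PiLp.continuous_apply 2 _ i) (Ici α)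
    rw [interior_Ici] at this
    exact this.symm
  have hsum :
      interior {y : EuclideanSpace ℝ (Fin n) | ∑ i, y i ≤ 1 - α} = {y | ∑ i, y i < 1 - α} := by
    have hsurj : Surjective (∑ i, EuclideanSpace.proj i : EuclideanSpace ℝ (Fin n) →L[ℝ] ℝ) :=
      fun t => ⟨EuclideanSpace.single ⟨0, hn⟩ t, by simp⟩
    have := ContinuousLinearMap.interior_preimage _ hsurj (Iic (1 - α))
    rw [interior_Iic] at this
    simpa [preimage, FunLike.coe_sum, Finset.sum_apply] using this
  simp only [truncatedSimplex, ofPred_and, ofPred_forall, interior_inter,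
    interior_iInter_of_finite, hcoord, hsum]

lemma mem_frontier_truncatedSimplex (hn : 0 < n) {y : EuclideanSpace ℝ (Fin n)} :
    y ∈ frontier (truncatedSimplex n α) ↔
      y ∈ truncatedSimplex n α ∧ ((∃ i, y i = α) ∨ ∑ i, y i = 1 - α) := by
  rw [isClosed_truncatedSimplex.frontier_eq, interior_truncatedSimplex hn, mem_sdiff]
  refine and_congr_right fun ⟨hle, hsum⟩ => ?_
  simp only [mem_ofPred_eq, not_and_or, not_forall, not_lt]
  exact or_congr (exists_congr fun i => (hle i).ge_iff_eq') hsum.ge_iff_eq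

lemma interior_truncatedSimplex_nonempty (hn : 0 < n) (hα : α < 1 / ((n : ℝ) + 1)) :
    (interior (truncatedSimplex n α)).Nonempty := by
  rw [interior_truncatedSimplex hn]
  refine ⟨WithLp.toLp 2 fun _ => 1 / ((n : ℝ) + 1), fun _ => hα, ?_⟩
  have : (n : ℝ) * (1 / ((n : ℝ) + 1)) + 1 / ((n : ℝ) + 1) = 1 := by field_simp
  simp only [Finset.sum_const, Finset.card_univ, Fintype.card_fin, nsmul_eq_mul]
  linarith

end truncatedSimplex

lemma sum_castSucc_eq_one_sub_last {n : ℕ} {x : Fin (n+1) → ℝ} (hx : ∑ j, x j = 1) :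
    ∑ i : Fin n, x i.castSucc = 1 - x (Fin.last n) :=
  eq_sub_of_add_eq ((Fin.sum_univ_castSucc x).symm.trans hx)

lemma init_mem_frontier_truncatedSimplex_iff {n : ℕ} {α : ℝ} (hn : 0 < n)
    {x : Fin (n+1) → ℝ} (hx : ∑ j, x j = 1) :
    WithLp.toLp 2 (Fin.init x) ∈ frontier (truncatedSimplex n α) ↔
      (∀ j, α ≤ x j) ∧ ∃ j, x j = α := by
  rw [mem_frontier_truncatedSimplex hn, Fin.forall_fin_succ', Fin.exists_fin_succ']
  simp only [truncatedSimplex, mem_ofPred_eq, Fin.init,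
    sum_castSucc_eq_one_sub_last hx, sub_le_sub_iff_left, sub_right_inj]

def layerHomeomorphFrontier {n : ℕ} {α : ℝ} (hn : 0 < n) (hα : 0 ≤ α) :
    layer n α ≃ₜ frontier (truncatedSimplex n α) where
  toFun x := ⟨WithLp.toLp 2 (Fin.init x.1.1),
    (init_mem_frontier_truncatedSimplex_iff hn x.1.2.2).2 (mem_layer_iff.1 x.2)⟩
  invFun y :=
    let x : Fin (n+1) → ℝ := Fin.snoc y.1.ofLp (1 - ∑ i, y.1 i)
    have hx : ∑ j, x j = 1 := by simp [x, Fin.sum_snoc]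
    have hlayer := (init_mem_frontier_truncatedSimplex_iff hn hx).1 (by simp [x])
    ⟨⟨x, fun j => hα.trans (hlayer.1 j), hx⟩, mem_layer_iff.2 hlayer⟩
  left_inv x := by
    refine Subtype.ext (Subtype.ext ?_)
    conv_rhs => rw [← Fin.snoc_init_self x.1.1]
    simp [Fin.init, sum_castSucc_eq_one_sub_last x.1.2.2]
  right_inv y := by
    ext
    simp
  continuous_toFun := by fun_prop
  continuous_invFun := by
    refine .subtype_mk (.subtype_mk (.finSnoc ?_ ?_) _) _ <;> fun_prop

theorem layer_homeomorphic_sphere (n : ℕ) (hn : 1 ≤ n) (α : ℝ)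
    (hα0 : 0 ≤ α) (hα1 : α < 1/((n:ℝ)+1)) :
    Nonempty (↥(layer n α) ≃ₜ ↥(Metric.sphere (0 : EuclideanSpace ℝ (Fin n)) 1)) := by
  obtain ⟨h, -, -, hfrontier⟩ := exists_homeomorph_image_interior_closure_frontier_eq_unitBall
    convex_truncatedSimplex (interior_truncatedSimplex_nonempty hn hα1) isBounded_truncatedSimplex
  exact ⟨(layerHomeomorphFrontier hn hα0).trans ((h.image _).trans (.setCongr hfrontier))⟩

end
end

section
/- Let n ≥ 1 and let Φ ∈ COMFORT(Δ_n). Then for every x ∈ Δ_n and all indices i, j ∈ {0,…,n}: x_i = x_j if and only if Φ(x)_i = Φ(x)_j; equivalently, x_i < x_j if and only if Φ(x)_i < Φ(x)_j. In particular every maximal block of equal components of x is mapped to a maximal block of equal components of Φ(x) at the same (sorted) positions. -/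
open scoped BigOperators

noncomputable section

/-!
Order-preservation already gives `x i = x j → Φ(x) i = Φ(x) j`. Conversely, if `Φ(x) i = Φ(x) j`,
the transposition of `i` and `j` fixes `Φ(x)`; since `Φ` commutes with it, `Φ` takes the
transposed point to `Φ(x)`, so by injectivity the transposition fixes `x`, i.e. `x i = x j`.
Hence `Φ(x) i ≤ Φ(x) j` forces `x i ≤ x j` (otherwise order-preservation makes the images
equal, hence `x i = x j`), and strict inequalities are the negated weak ones.
-/

namespace IsComfort

variable {n : ℕ} {Φ : Spx (n+1) ≃ₜ Spx (n+1)} {x : Spx (n+1)} {i j : Fin (n+1)}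

theorem apply_eq_apply_of_eq (hΦ : IsComfort Φ) (h : x.1 i = x.1 j) :
    (Φ x).1 i = (Φ x).1 j :=
  (hΦ.mono x i j h.le).antisymm (hΦ.mono x j i h.ge)

theorem eq_of_apply_eq_apply (hΦ : IsComfort Φ) (h : (Φ x).1 i = (Φ x).1 j) :
    x.1 i = x.1 j := by
  let σ := Equiv.swap i j
  have hfix : Φ ⟨fun k => x.1 (σ k), perm_mem σ x.2⟩ = Φ x :=
    Subtype.ext <| (hΦ.perm σ x).trans <| funext (Equiv.apply_swap_eq_self h)
  have hx : (fun k => x.1 (σ k)) = x.1 := congrArg Subtype.val (Φ.injective hfix)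
  simpa [σ] using (congrFun hx i).symm

theorem apply_eq_apply_iff (hΦ : IsComfort Φ) : (Φ x).1 i = (Φ x).1 j ↔ x.1 i = x.1 j :=
  ⟨hΦ.eq_of_apply_eq_apply, hΦ.apply_eq_apply_of_eq⟩

theorem apply_le_apply_iff (hΦ : IsComfort Φ) : (Φ x).1 i ≤ (Φ x).1 j ↔ x.1 i ≤ x.1 j := by
  refine ⟨fun h => ?_, hΦ.mono x i j⟩
  by_contra! hlt
  have hΦeq : (Φ x).1 j = (Φ x).1 i := (hΦ.mono x j i hlt.le).antisymm h
  exact hlt.ne (hΦ.eq_of_apply_eq_apply hΦeq)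

theorem apply_lt_apply_iff (hΦ : IsComfort Φ) : (Φ x).1 i < (Φ x).1 j ↔ x.1 i < x.1 j := by
  simpa only [not_le] using (hΦ.apply_le_apply_iff (i := j) (j := i)).not

end IsComfort

theorem comfort_preserves_coordinate_relations_general (n : ℕ)
    (Φ : Spx (n+1) ≃ₜ Spx (n+1)) (hΦ : IsComfort Φ) :
    ∀ (x : Spx (n+1)) (i j : Fin (n+1)),
      (x.1 i = x.1 j ↔ (Φ x).1 i = (Φ x).1 j) ∧
      (x.1 i < x.1 j ↔ (Φ x).1 i < (Φ x).1 j) :=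
  fun _ _ _ => ⟨hΦ.apply_eq_apply_iff.symm, hΦ.apply_lt_apply_iff.symm⟩

theorem comfort_preserves_coordinate_relations (n : ℕ) (hn : 1 ≤ n)
    (Φ : Spx (n+1) ≃ₜ Spx (n+1)) (hΦ : IsComfort Φ) :
    ∀ (x : Spx (n+1)) (i j : Fin (n+1)),
      (x.1 i = x.1 j ↔ (Φ x).1 i = (Φ x).1 j) ∧
      (x.1 i < x.1 j ↔ (Φ x).1 i < (Φ x).1 j) :=
  comfort_preserves_coordinate_relations_general n Φ hΦ

end
end

section
/- Let n ≥ 1, let α, β satisfy 0 ≤ α < 1/(n+1) and 0 ≤ β < 1/(n+1), and let Φ ∈ COMFORT(Δ_n) be such that Φ restricts to a homeomorphism of ♣_{n,α} onto ♣_{n,β}. Let x ∈ ♣_{n,α} ∩ Sponge(Δ_n), so that x has exactly one component equal to α, say x_q = α. Then Φ(x) has exactly one component equal to β and it occurs at the same index: Φ(x)_q = β and Φ(x)_i ≠ β for every i ≠ q. -/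
open scoped BigOperators

noncomputable section

/-!
A comfort map is strictly order preserving, hence maps `Sponge` into itself. Call
`{z | z i < α for i ∈ S, z i > α for i ∉ S}` a chamber: it is convex and misses the `α`-cross, so
no coordinate of `Φ z` equals `β` on it, and each coordinate stays on one side of `β`. Swapping
two indices on the same side of `S` keeps the chamber, and monotonicity compares the two sides;
so if some coordinate outside `S` were below `β`, all would be, impossible as `β < 1/(n+1)`.
A point `x` of the sponge with `x q = α` is a limit of points of the chamber with
`S = {i | x i < α}`, whence `(Φ x) q ≥ β`. If `(Φ x) p = β`, the same argument for `Φ⁻¹` at the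
sponge point `Φ x` gives `x p ≥ α = x q`, while `(Φ x) q ≥ (Φ x) p` gives `x q ≥ x p`; so `p = q`.
-/

open Set Topology

lemma exists_inv_succ_le_coord {n : ℕ} (x : Spx (n+1)) : ∃ i, 1/((n:ℝ)+1) ≤ x.1 i := by
  obtain ⟨i, -, hi⟩ := Finset.exists_le_of_sum_le (f := fun _ => 1/((n:ℝ)+1)) (g := x.1)
    Finset.univ_nonempty (by simp [x.2.2, field])
  exact ⟨i, hi⟩

lemma add_smul_single_sub_single_mem_stdSimplex {ι : Type*} [Fintype ι] [DecidableEq ι]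
    {x : ι → ℝ} (hx : x ∈ stdSimplex ℝ ι) {i j : ι} (hij : i ≠ j) {t : ℝ} (ht0 : 0 ≤ t)
    (htj : t ≤ x j) :
    x + t • (Pi.single i 1 - Pi.single j 1) ∈ stdSimplex ℝ ι := by
  refine ⟨fun k => ?_, ?_⟩
  · rcases eq_or_ne k i with rfl | hki
    · simp [hij, add_nonneg (hx.1 k) ht0]
    rcases eq_or_ne k j with rfl | hkj
    · simp [hki, htj]
    · simp [hki, hkj, hx.1 k]
  · simp [Finset.sum_add_distrib, ← Finset.mul_sum, Finset.sum_sub_distrib, hx.2]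

def permute {n : ℕ} (ϑ : Equiv.Perm (Fin (n+1))) (x : Spx (n+1)) : Spx (n+1) :=
  ⟨fun i => x.1 (ϑ i), perm_mem ϑ x.2⟩

namespace IsComfort

variable {n : ℕ} {Φ : Spx (n+1) ≃ₜ Spx (n+1)}

lemma apply_permute (hΦ : IsComfort Φ) (ϑ : Equiv.Perm (Fin (n+1))) (x : Spx (n+1))
    (i : Fin (n+1)) : (Φ (permute ϑ x)).1 i = (Φ x).1 (ϑ i) :=
  congrFun (hΦ.perm ϑ x) i

/-- If `Φ x` had equal coordinates `i, j`, it would be fixed by the transposition of `i` and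
`j`, so by injectivity `x` would be too. -/
lemma apply_lt_apply (hΦ : IsComfort Φ) (x : Spx (n+1)) {i j : Fin (n+1)}
    (h : x.1 i < x.1 j) : (Φ x).1 i < (Φ x).1 j := by
  refine (hΦ.mono x i j h.le).lt_of_ne fun hij => h.ne ?_
  have hfix : Φ (permute (Equiv.swap i j) x) = Φ x := by
    refine Subtype.ext (funext fun k => ?_)
    rw [hΦ.apply_permute]
    rcases eq_or_ne k i with rfl | hki
    · rw [Equiv.swap_apply_left, hij]
    rcases eq_or_ne k j with rfl | hkj
    · rw [Equiv.swap_apply_right, hij]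
    · rw [Equiv.swap_apply_of_ne_of_ne hki hkj]
  simpa [permute, eq_comm] using congrFun (congrArg Subtype.val (Φ.injective hfix)) i

lemma le_of_apply_le (hΦ : IsComfort Φ) (x : Spx (n+1)) {i j : Fin (n+1)}
    (h : (Φ x).1 i ≤ (Φ x).1 j) : x.1 i ≤ x.1 j :=
  not_lt.mp fun hji => (hΦ.apply_lt_apply x hji).not_ge h

lemma mapsTo_sponge (hΦ : IsComfort Φ) : MapsTo Φ (sponge n) (sponge n) :=
  fun x hx i j hij => hx i j ((hΦ.le_of_apply_le x hij.le).antisymm (hΦ.le_of_apply_le x hij.ge))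

protected lemma symm (hΦ : IsComfort Φ) : IsComfort Φ.symm where
  perm ϑ y := by
    have h : Φ (permute ϑ (Φ.symm y)) = permute ϑ y := by
      refine Subtype.ext (funext fun i => ?_)
      rw [hΦ.apply_permute, Φ.apply_symm_apply]
      rfl
    change (Φ.symm (permute ϑ y)).1 = _
    rw [← h, Φ.symm_apply_apply]
    rfl
  mono y i j h := hΦ.le_of_apply_le (Φ.symm y) (by simpa using h)

end IsComfort

def chamber (n : ℕ) (α : ℝ) (S : Set (Fin (n+1))) : Set (Spx (n+1)) :=
  {z | (∀ i ∈ S, z.1 i < α) ∧ ∀ i ∉ S, α < z.1 i}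

section Chamber

variable {n : ℕ} {α β : ℝ} {S : Set (Fin (n+1))} {z : Spx (n+1)}

lemma isPreconnected_chamber : IsPreconnected (chamber n α S) := by
  have hconv : Convex ℝ ({y : Fin (n+1) → ℝ | (∀ i ∈ S, y i < α) ∧ ∀ i ∉ S, α < y i} ∩
      stdSimplex ℝ (Fin (n+1))) := by
    refine Convex.inter ?_ (convex_stdSimplex ℝ _)
    intro u hu v hv a b ha hb hab
    exact ⟨fun i hi => by simpa using convex_Iio α (hu.1 i hi) (hv.1 i hi) ha hb hab,
      fun i hi => by simpa using convex_Ioi α (hu.2 i hi) (hv.2 i hi) ha hb hab⟩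
  rw [← Topology.IsInducing.subtypeVal.isPreconnected_image]
  convert hconv.isPreconnected
  ext y
  exact ⟨fun ⟨z, hz, hzy⟩ => hzy ▸ ⟨hz, z.2⟩, fun ⟨hy, hmem⟩ => ⟨⟨y, hmem⟩, hy, rfl⟩⟩

lemma notMem_cross_of_mem_chamber (hz : z ∈ chamber n α S) : z ∉ cross n α := by
  rintro ⟨j, hj⟩
  by_cases hjS : j ∈ S
  · exact (hz.1 j hjS).ne hj
  · exact (hz.2 j hjS).ne' hj

lemma permute_swap_mem_chamber (hz : z ∈ chamber n α S) {i j : Fin (n+1)}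
    (hij : i ∈ S ↔ j ∈ S) : permute (Equiv.swap i j) z ∈ chamber n α S := by
  have hswap : ∀ k, Equiv.swap i j k ∈ S ↔ k ∈ S := by
    intro k
    rcases eq_or_ne k i with rfl | hki
    · simp [hij]
    rcases eq_or_ne k j with rfl | hkj
    · simp [hij]
    · rw [Equiv.swap_apply_of_ne_of_ne hki hkj]
  exact ⟨fun k hk => hz.1 _ ((hswap k).2 hk), fun k hk => hz.2 _ (mt (hswap k).1 hk)⟩

variable {Φ : Spx (n+1) ≃ₜ Spx (n+1)}

lemma continuous_apply_coord (i : Fin (n+1)) : Continuous fun w => (Φ w).1 i :=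
  (continuous_apply i).comp (continuous_subtype_val.comp Φ.continuous)

lemma apply_ne_of_mem_chamber (hmap : ⇑Φ '' cross n α = cross n β) (hz : z ∈ chamber n α S)
    (i : Fin (n+1)) : (Φ z).1 i ≠ β := fun h =>
  notMem_cross_of_mem_chamber hz (Φ.injective.mem_set_image.mp (hmap ▸ ⟨i, h⟩))

lemma apply_lt_of_mem_chamber (hmap : ⇑Φ '' cross n α = cross n β) {z' : Spx (n+1)}
    (hz : z ∈ chamber n α S) (hz' : z' ∈ chamber n α S) {i : Fin (n+1)}
    (h : (Φ z').1 i < β) : (Φ z).1 i < β := by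
  by_contra! hle
  obtain ⟨w, hw, hwβ⟩ := isPreconnected_chamber.intermediate_value hz' hz
    (continuous_apply_coord i).continuousOn ⟨h.le, hle⟩
  exact apply_ne_of_mem_chamber hmap hw i hwβ

namespace IsComfort

lemma apply_lt_of_mem_chamber_of_mem_iff (hΦ : IsComfort Φ)
    (hmap : ⇑Φ '' cross n α = cross n β) (hz : z ∈ chamber n α S) {i j : Fin (n+1)}
    (hij : i ∈ S ↔ j ∈ S) (h : (Φ z).1 j < β) : (Φ z).1 i < β :=
  apply_lt_of_mem_chamber hmap hz (permute_swap_mem_chamber hz hij)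
    (by rwa [hΦ.apply_permute, Equiv.swap_apply_left])

lemma lt_apply_of_mem_chamber (hΦ : IsComfort Φ) (hβ : β < 1/((n:ℝ)+1))
    (hmap : ⇑Φ '' cross n α = cross n β) (hz : z ∈ chamber n α S) {i : Fin (n+1)}
    (hi : i ∉ S) : β < (Φ z).1 i := by
  by_contra! hle
  have hlt : (Φ z).1 i < β := hle.lt_of_ne (apply_ne_of_mem_chamber hmap hz i)
  have hall : ∀ j, (Φ z).1 j < β := fun j => by
    by_cases hj : j ∈ S
    · exact (hΦ.apply_lt_apply z ((hz.1 j hj).trans (hz.2 i hi))).trans hlt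
    · exact hΦ.apply_lt_of_mem_chamber_of_mem_iff hmap hz (iff_of_false hj hi) hlt
  obtain ⟨j, hj⟩ := exists_inv_succ_le_coord (Φ z)
  exact (hall j).not_ge (hβ.le.trans hj)

lemma le_apply_of_mem_closure_chamber (hΦ : IsComfort Φ) (hβ : β < 1/((n:ℝ)+1))
    (hmap : ⇑Φ '' cross n α = cross n β) (hz : z ∈ closure (chamber n α S)) {i : Fin (n+1)}
    (hi : i ∉ S) : β ≤ (Φ z).1 i :=
  closure_minimal (fun _ hw => (hΦ.lt_apply_of_mem_chamber hβ hmap hw hi).le)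
    (isClosed_le continuous_const (continuous_apply_coord i)) hz

end IsComfort

end Chamber

/-- Pushing mass from a coordinate above `α` to `x q` moves `x` into the chamber. -/
lemma mem_closure_chamber {n : ℕ} {α : ℝ} (hα : α < 1/((n:ℝ)+1)) {x : Spx (n+1)}
    {q : Fin (n+1)} (hq : x.1 q = α) (hx : ∀ i, x.1 i = α → i = q) :
    x ∈ closure (chamber n α {i | x.1 i < α}) := by
  obtain ⟨j, hj⟩ := exists_inv_succ_le_coord x
  have hαj : α < x.1 j := hα.trans_le hj
  have hqj : q ≠ j := by
    rintro rfl
    exact hαj.ne' hq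
  set v : Fin (n+1) → ℝ := Pi.single q 1 - Pi.single j 1
  rw [closure_subtype]
  refine mem_closure_of_tendsto (b := 𝓝[>] 0) (f := fun t : ℝ => x.1 + t • v) ?_ ?_
  · exact ((continuous_const.add (continuous_id.smul continuous_const)).tendsto' 0 x.1
      (by simp)).mono_left nhdsWithin_le_nhds
  filter_upwards [Ioo_mem_nhdsGT (sub_pos.mpr hαj)] with t ⟨ht0, htj⟩
  refine ⟨⟨_, add_smul_single_sub_single_mem_stdSimplex x.2 hqj ht0.le
    (by linarith [x.2.1 q])⟩, ⟨fun i hi => ?_, fun i hi => ?_⟩, rfl⟩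
  · have hiq : i ≠ q := by
      rintro rfl
      exact hi.ne hq
    have hij : i ≠ j := by
      rintro rfl
      exact hi.not_gt hαj
    simpa [v, hiq, hij] using hi
  · rcases eq_or_ne i q with rfl | hiq
    · simp [hqj, hq, ht0]
    rcases eq_or_ne i j with rfl | hij
    · simpa [hiq] using (by linarith : α + t < x.1 i)
    · simpa [v, hiq, hij] using (not_lt.mp hi).lt_of_ne' (mt (hx i) hiq)

lemma IsComfort.le_apply_of_eq_imp_eq {n : ℕ} {α β : ℝ} {Φ : Spx (n+1) ≃ₜ Spx (n+1)}
    (hΦ : IsComfort Φ) (hα : α < 1/((n:ℝ)+1)) (hβ : β < 1/((n:ℝ)+1))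
    (hmap : ⇑Φ '' cross n α = cross n β) {x : Spx (n+1)} {q : Fin (n+1)} (hq : x.1 q = α)
    (hx : ∀ i, x.1 i = α → i = q) : β ≤ (Φ x).1 q :=
  hΦ.le_apply_of_mem_closure_chamber hβ hmap (mem_closure_chamber hα hq hx) (by simp [hq])

theorem comfort_cross_sponge_single_component_general (n : ℕ) (α β : ℝ)
    (hα1 : α < 1/((n:ℝ)+1))
    (hβ1 : β < 1/((n:ℝ)+1))
    (Φ : Spx (n+1) ≃ₜ Spx (n+1)) (hΦ : IsComfort Φ)
    (hmap : ⇑Φ '' cross n α = cross n β)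
    (x : Spx (n+1)) (hx : x ∈ cross n α ∩ sponge n)
    (q : Fin (n+1)) (hq : x.1 q = α) :
    (Φ x).1 q = β ∧ ∀ i : Fin (n+1), i ≠ q → (Φ x).1 i ≠ β := by
  have hsponge : Φ x ∈ sponge n := hΦ.mapsTo_sponge hx.2
  obtain ⟨p, hp⟩ : Φ x ∈ cross n β := hmap ▸ mem_image_of_mem Φ hx.1
  have hβq : β ≤ (Φ x).1 q :=
    hΦ.le_apply_of_eq_imp_eq hα1 hβ1 hmap hq fun i hi => hx.2 i q (hi.trans hq.symm)
  have hmap_symm : ⇑Φ.symm '' cross n β = cross n α := by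
    rw [← hmap, Φ.image_symm, Φ.preimage_image]
  have hαp : α ≤ x.1 p := by
    simpa using hΦ.symm.le_apply_of_eq_imp_eq hβ1 hα1 hmap_symm hp
      fun i hi => hsponge i p (hi.trans hp.symm)
  have hpq : p = q :=
    hx.2 p q ((hΦ.le_of_apply_le x (hp ▸ hβq)).antisymm (hq ▸ hαp))
  subst hpq
  exact ⟨hp, fun i hi h => hi (hsponge i p (h.trans hp.symm))⟩

theorem comfort_cross_sponge_single_component (n : ℕ) (hn : 1 ≤ n) (α β : ℝ)
    (hα0 : 0 ≤ α) (hα1 : α < 1/((n:ℝ)+1))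
    (hβ0 : 0 ≤ β) (hβ1 : β < 1/((n:ℝ)+1))
    (Φ : Spx (n+1) ≃ₜ Spx (n+1)) (hΦ : IsComfort Φ)
    (hmap : ⇑Φ '' cross n α = cross n β)
    (x : Spx (n+1)) (hx : x ∈ cross n α ∩ sponge n)
    (q : Fin (n+1)) (hq : x.1 q = α) :
    (Φ x).1 q = β ∧ ∀ i : Fin (n+1), i ≠ q → (Φ x).1 i ≠ β :=
  comfort_cross_sponge_single_component_general n α β hα1 hβ1 Φ hΦ hmap x hx q hq

end
end

section
/- Let n ≥ 1, let α, β satisfy 0 ≤ α < 1/(n+1) and 0 ≤ β < 1/(n+1), and let Φ ∈ COMFORT(Δ_n) be such that Φ restricts to a homeomorphism of ♣_{n,α} onto ♣_{n,β}. Let x ∈ Δ_n \ ♣_{n,α}. Then for every index i ∈ {0,…,n}: x_i < α if and only if Φ(x)_i < β, and x_i > α if and only if Φ(x)_i > β. In particular α < min_j x_j if and only if β < min_j Φ(x)_j. -/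
open scoped BigOperators

noncomputable section

/-
The complement of the α-cross splits into convex cells, one for each set of coordinates below
α. Since Φ maps the complement of ♣_{n,α} onto that of ♣_{n,β}, the intermediate value
theorem shows that it maps each α-cell into a single β-cell. Let the coordinates of x below α
be those off T, and let y be the barycenter of the face spanned by T, which lies in the cell of
x. As Φ keeps the order, Φ(y) is constant on T and on its complement and largest on T, and a
largest coordinate is at least 1/(n+1) > β. If the coordinates of Φ(y) off T were not below β,
then Φ(y) would share the cell of the barycenter of Δ_n, which Φ fixes, and by the same
argument for Φ⁻¹ so would y.
-/

open Set

lemma IsPreconnected.lt_iff_lt_of_forall_ne {X α : Type*} [TopologicalSpace X] [LinearOrder α]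
    [TopologicalSpace α] [OrderClosedTopology α] {s : Set X} (hs : IsPreconnected s)
    {f : X → α} (hf : ContinuousOn f s) {c : α} (hc : ∀ z ∈ s, f z ≠ c)
    {a b : X} (ha : a ∈ s) (hb : b ∈ s) : f a < c ↔ f b < c := by
  have key : ∀ a ∈ s, ∀ b ∈ s, f a < c → f b < c := fun a ha b hb hac =>
    not_le.1 fun hcb =>
      let ⟨z, hz, hzc⟩ := hs.intermediate_value ha hb hf ⟨hac.le, hcb⟩
      hc z hz hzc
  exact ⟨key a ha b hb, key b hb a ha⟩

section

variable {n : ℕ}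

lemma exists_one_div_le_coord (x : Spx (n+1)) : ∃ j, 1 / ((n:ℝ)+1) ≤ x.1 j := by
  have hsum : ∑ _j : Fin (n+1), 1 / ((n:ℝ)+1) ≤ ∑ j, x.1 j := by
    rw [x.2.2, Finset.sum_const, Finset.card_univ, Fintype.card_fin, nsmul_eq_mul]
    push_cast
    rw [mul_one_div_cancel (by positivity)]
  obtain ⟨j, -, hj⟩ := Finset.exists_le_of_sum_le Finset.univ_nonempty hsum
  exact ⟨j, hj⟩

lemma center_notMem_cross {α : ℝ} (hα1 : α < 1 / ((n:ℝ)+1)) : center n ∉ cross n α :=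
  fun ⟨_, hj⟩ => hα1.ne' hj

def faceCenter (T : Finset (Fin (n+1))) (hT : T.Nonempty) : Spx (n+1) :=
  ⟨fun j => if j ∈ T then (T.card : ℝ)⁻¹ else 0, by
    constructor
    · intro j
      dsimp only
      split_ifs <;> positivity
    · rw [Finset.sum_ite_mem, Finset.univ_inter, Finset.sum_const, nsmul_eq_mul]
      exact mul_inv_cancel₀ (by exact_mod_cast hT.card_pos.ne')⟩

section faceCenter

variable {T : Finset (Fin (n+1))} (hT : T.Nonempty)

lemma faceCenter_apply_of_notMem {j : Fin (n+1)} (hj : j ∉ T) : (faceCenter T hT).1 j = 0 :=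
  if_neg hj

lemma one_div_le_faceCenter_apply {j : Fin (n+1)} (hj : j ∈ T) :
    1 / ((n:ℝ)+1) ≤ (faceCenter T hT).1 j := by
  have hcard : (T.card : ℝ) ≤ n + 1 := by
    exact_mod_cast T.card_le_univ.trans_eq (Fintype.card_fin _)
  simp only [faceCenter, if_pos hj, one_div]
  exact inv_anti₀ (by exact_mod_cast hT.card_pos) hcard

lemma faceCenter_apply_le (i : Fin (n+1)) {j : Fin (n+1)} (hj : j ∈ T) :
    (faceCenter T hT).1 i ≤ (faceCenter T hT).1 j := by
  simp only [faceCenter, if_pos hj]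
  split_ifs
  exacts [le_rfl, by positivity]

variable {α : ℝ} (hα : 0 < α) (hα1 : α < 1 / ((n:ℝ)+1))
include hα hα1

lemma faceCenter_apply_lt_iff (j : Fin (n+1)) : (faceCenter T hT).1 j < α ↔ j ∉ T := by
  by_cases hj : j ∈ T
  · exact iff_of_false (hα1.trans_le (one_div_le_faceCenter_apply hT hj)).not_gt (not_not.2 hj)
  · rw [faceCenter_apply_of_notMem hT hj]
    exact iff_of_true hα hj

lemma faceCenter_notMem_cross : faceCenter T hT ∉ cross n α := by
  rintro ⟨j, hj⟩
  by_cases hjT : j ∈ T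
  · exact (hα1.trans_le (one_div_le_faceCenter_apply hT hjT)).ne' hj
  · rw [faceCenter_apply_of_notMem hT hjT] at hj
    exact hα.ne hj

end faceCenter

def offCrossCell (n : ℕ) (α : ℝ) (S : Set (Fin (n+1))) : Set (Spx (n+1)) :=
  {z | z ∉ cross n α ∧ ∀ j, z.1 j < α ↔ j ∈ S}

lemma convex_image_val_offCrossCell (α : ℝ) (S : Set (Fin (n+1))) :
    Convex ℝ (Subtype.val '' offCrossCell n α S) := by
  rintro _ ⟨v, ⟨hvα, hvS⟩, rfl⟩ _ ⟨w, ⟨hwα, hwS⟩, rfl⟩ a b ha hb hab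
  have hside : ∀ z ∈ offCrossCell n α S, ∀ j, j ∉ S → α < z.1 j := fun z hz j hj =>
    (not_lt.1 fun h => hj ((hz.2 j).1 h)).lt_of_ne fun h => hz.1 ⟨j, h.symm⟩
  have hcomb : ∀ j, (a • v.1 + b • w.1) j < α ∧ j ∈ S ∨ α < (a • v.1 + b • w.1) j ∧ j ∉ S := by
    intro j
    by_cases hj : j ∈ S
    · exact .inl ⟨convex_Iio α ((hvS j).2 hj) ((hwS j).2 hj) ha hb hab, hj⟩
    · exact .inr ⟨convex_Ioi α (hside v ⟨hvα, hvS⟩ j hj) (hside w ⟨hwα, hwS⟩ j hj) ha hb hab, hj⟩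
  refine ⟨⟨_, convex_stdSimplex ℝ _ v.2 w.2 ha hb hab⟩, ⟨?_, fun j => ?_⟩, rfl⟩
  · rintro ⟨j, hj⟩
    rcases hcomb j with ⟨h, -⟩ | ⟨h, -⟩
    exacts [h.ne hj, h.ne' hj]
  · rcases hcomb j with ⟨h, hj⟩ | ⟨h, hj⟩
    exacts [iff_of_true h hj, iff_of_false h.not_gt hj]

lemma isPreconnected_offCrossCell (α : ℝ) (S : Set (Fin (n+1))) :
    IsPreconnected (offCrossCell n α S) :=
  Topology.IsInducing.subtypeVal.isPreconnected_image.1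
    (convex_image_val_offCrossCell α S).isPreconnected

lemma coord_lt_iff_of_mapsTo_compl_cross {α β : ℝ} {G : Spx (n+1) → Spx (n+1)}
    (hG : Continuous G) (hGmaps : MapsTo G (cross n α)ᶜ (cross n β)ᶜ) {x y : Spx (n+1)}
    (hx : x ∉ cross n α) (hy : y ∉ cross n α) (hxy : ∀ j, x.1 j < α ↔ y.1 j < α)
    (i : Fin (n+1)) : (G x).1 i < β ↔ (G y).1 i < β := by
  have hxs : x ∈ offCrossCell n α {j | x.1 j < α} := ⟨hx, fun _ => Iff.rfl⟩
  have hys : y ∈ offCrossCell n α {j | x.1 j < α} := ⟨hy, fun j => (hxy j).symm⟩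
  refine (isPreconnected_offCrossCell α _).lt_iff_lt_of_forall_ne
    ((continuous_apply i).comp (continuous_subtype_val.comp hG)).continuousOn ?_ hxs hys
  exact fun z hz hzi => hGmaps hz.1 ⟨i, hzi⟩

namespace IsComfort

variable {Φ : Spx (n+1) ≃ₜ Spx (n+1)} (hΦ : IsComfort Φ)
include hΦ

lemma apply_eq_apply {x : Spx (n+1)} {i j : Fin (n+1)} (h : x.1 i = x.1 j) :
    (Φ x).1 i = (Φ x).1 j :=
  (hΦ.mono x i j h.le).antisymm (hΦ.mono x j i h.ge)

lemma apply_center : Φ (center n) = center n := by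
  have hconst : ∀ j, (Φ (center n)).1 j = (Φ (center n)).1 0 := fun j => hΦ.apply_eq_apply rfl
  have hsum := (Φ (center n)).2.2
  simp only [hconst, Finset.sum_const, Finset.card_univ, Fintype.card_fin, nsmul_eq_mul] at hsum
  push_cast at hsum
  refine Subtype.ext (funext fun j => ?_)
  rw [hconst]
  change _ = 1 / ((n:ℝ)+1)
  rw [eq_div_iff (by positivity), mul_comm, hsum]

lemma one_div_le_apply_of_forall_le {x : Spx (n+1)} {j : Fin (n+1)}
    (hj : ∀ i, x.1 i ≤ x.1 j) : 1 / ((n:ℝ)+1) ≤ (Φ x).1 j :=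
  let ⟨i, hi⟩ := exists_one_div_le_coord (Φ x)
  hi.trans (hΦ.mono x i j (hj i))

variable {α β : ℝ} (hα1 : α < 1 / ((n:ℝ)+1)) (hβ1 : β < 1 / ((n:ℝ)+1))
include hα1 hβ1

lemma coord_faceCenter_lt_iff (hα : 0 < α) (hoff : MapsTo Φ (cross n α)ᶜ (cross n β)ᶜ)
    (hoff' : MapsTo Φ.symm (cross n β)ᶜ (cross n α)ᶜ)
    {T : Finset (Fin (n+1))} (hT : T.Nonempty) (i : Fin (n+1)) :
    (Φ (faceCenter T hT)).1 i < β ↔ i ∉ T := by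
  set y := faceCenter T hT
  have hbig : ∀ j ∈ T, β < (Φ y).1 j := fun j hj =>
    hβ1.trans_le (hΦ.one_div_le_apply_of_forall_le fun i => faceCenter_apply_le hT i hj)
  refine ⟨fun hi hiT => (hbig i hiT).not_gt hi, fun hiT => ?_⟩
  by_contra hge
  have hnone : ∀ j, ¬ (Φ y).1 j < β := fun j => by
    by_cases hjT : j ∈ T
    · exact (hbig j hjT).not_gt
    · rwa [hΦ.apply_eq_apply ((faceCenter_apply_of_notMem hT hjT).trans
        (faceCenter_apply_of_notMem hT hiT).symm)]
  -- `Φ y` would lie in the cell of the fixed barycenter, so `y = Φ⁻¹ (Φ y)` would too.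
  have hcell := coord_lt_iff_of_mapsTo_compl_cross Φ.symm.continuous hoff'
    (hoff (faceCenter_notMem_cross hT hα hα1)) (center_notMem_cross hβ1)
    (fun j => iff_of_false (hnone j) (not_lt.2 hβ1.le)) i
  rw [Φ.symm_apply_apply, Φ.symm_apply_eq.2 hΦ.apply_center.symm] at hcell
  exact (not_lt.2 hα1.le) (hcell.1 ((faceCenter_apply_lt_iff hT hα hα1 i).2 hiT))

lemma coord_lt_iff (hoff : MapsTo Φ (cross n α)ᶜ (cross n β)ᶜ)
    (hoff' : MapsTo Φ.symm (cross n β)ᶜ (cross n α)ᶜ) {x : Spx (n+1)} (hx : x ∉ cross n α)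
    (i : Fin (n+1)) : x.1 i < α ↔ (Φ x).1 i < β := by
  by_cases hS : ∃ j, x.1 j < α
  · obtain ⟨j₀, hj₀⟩ := hS
    have hα : 0 < α := (x.2.1 j₀).trans_lt hj₀
    set T := Finset.univ.filter fun j => α < x.1 j
    have hT : T.Nonempty :=
      let ⟨j, hj⟩ := exists_one_div_le_coord x
      ⟨j, Finset.mem_filter.2 ⟨Finset.mem_univ j, hα1.trans_le hj⟩⟩
    have hxy : ∀ j, x.1 j < α ↔ (faceCenter T hT).1 j < α := fun j => by
      simp only [faceCenter_apply_lt_iff hT hα hα1, T, Finset.mem_filter, Finset.mem_univ,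
        true_and, not_lt]
      exact ⟨le_of_lt, fun h => h.lt_of_ne fun e => hx ⟨j, e⟩⟩
    rw [← coord_lt_iff_of_mapsTo_compl_cross Φ.continuous hoff (faceCenter_notMem_cross hT hα hα1)
      hx (fun j => (hxy j).symm) i, hΦ.coord_faceCenter_lt_iff hα1 hβ1 hα hoff hoff' hT i, hxy,
      faceCenter_apply_lt_iff hT hα hα1]
  · push Not at hS
    have hcell := coord_lt_iff_of_mapsTo_compl_cross Φ.continuous hoff hx
      (center_notMem_cross hα1) (fun j => iff_of_false (hS j).not_gt (not_lt.2 hα1.le)) i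
    rw [hΦ.apply_center] at hcell
    exact iff_of_false (hS i).not_gt (hcell.not.2 (not_lt.2 hβ1.le))

end IsComfort

end

theorem comfort_offcross_component_comparisons_general (n : ℕ) (α β : ℝ)
    (hα1 : α < 1/((n:ℝ)+1))
    (hβ1 : β < 1/((n:ℝ)+1))
    (Φ : Spx (n+1) ≃ₜ Spx (n+1)) (hΦ : IsComfort Φ)
    (hmap : ⇑Φ '' cross n α = cross n β)
    (x : Spx (n+1)) (hx : x ∉ cross n α) :
    (∀ i : Fin (n+1), (x.1 i < α ↔ (Φ x).1 i < β) ∧ (α < x.1 i ↔ β < (Φ x).1 i)) ∧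
    (α < minCoord x ↔ β < minCoord (Φ x)) := by
  have hoff : MapsTo Φ (cross n α)ᶜ (cross n β)ᶜ := SurjOn.mapsTo_compl hmap.ge Φ.injective
  have hoff' : MapsTo Φ.symm (cross n β)ᶜ (cross n α)ᶜ := SurjOn.mapsTo_compl
    (fun z hz => ⟨Φ z, hmap ▸ mem_image_of_mem Φ hz, Φ.symm_apply_apply z⟩) Φ.symm.injective
  have hlt := hΦ.coord_lt_iff hα1 hβ1 hoff hoff' hx
  have hΦx : Φ x ∉ cross n β := hoff hx
  have hgt : ∀ i, α < x.1 i ↔ β < (Φ x).1 i := fun i => by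
    have hxi : x.1 i ≠ α := fun h => hx ⟨i, h⟩
    have hΦxi : (Φ x).1 i ≠ β := fun h => hΦx ⟨i, h⟩
    rw [← not_iff_not, not_lt, not_lt, hxi.le_iff_lt, hΦxi.le_iff_lt, hlt i]
  refine ⟨fun i => ⟨hlt i, hgt i⟩, ?_⟩
  simp only [minCoord, Finset.lt_inf'_iff, Finset.mem_univ, true_implies, hgt]

theorem comfort_offcross_component_comparisons (n : ℕ) (hn : 1 ≤ n) (α β : ℝ)
    (hα0 : 0 ≤ α) (hα1 : α < 1/((n:ℝ)+1))
    (hβ0 : 0 ≤ β) (hβ1 : β < 1/((n:ℝ)+1))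
    (Φ : Spx (n+1) ≃ₜ Spx (n+1)) (hΦ : IsComfort Φ)
    (hmap : ⇑Φ '' cross n α = cross n β)
    (x : Spx (n+1)) (hx : x ∉ cross n α) :
    (∀ i : Fin (n+1), (x.1 i < α ↔ (Φ x).1 i < β) ∧ (α < x.1 i ↔ β < (Φ x).1 i)) ∧
    (α < minCoord x ↔ β < minCoord (Φ x)) :=
  comfort_offcross_component_comparisons_general n α β hα1 hβ1 Φ hΦ hmap x hx

end
end

section
/- Let n ≥ 1 and let α, β satisfy 0 < α < 1/(n+1) and 0 < β < 1/(n+1). Let φ : BOU_n → BOU_n be a homeomorphism which respects coordinate permutations and keeps the order, and which restricts to a homeomorphism of BOU_n ∩ ♣_{n,α} onto BOU_n ∩ ♣_{n,β}. Then for every b ∈ BOU_n with c := φ(b) and all indices i, j ∈ {0,…,n}: (i) b_i = α if and only if c_i = β; (ii) b_i ≤ α if and only if c_i ≤ β; (iii) b_i = b_j if and only if c_i = c_j. -/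
open scoped BigOperators

noncomputable section

/-- a map `φ` defined on a subset `S ⊆ Δ_n` (with values in a subset `T ⊆ Δ_n`)
respects coordinate permutations and keeps the order. -/
def ComfortOn {n : ℕ} {S T : Set (Spx (n+1))} (φ : ↥S → ↥T) : Prop :=
  (∀ (ϑ : Equiv.Perm (Fin (n+1))) (x : ↥S)
      (h : (⟨fun i => (x : Spx (n+1)).1 (ϑ i), perm_mem ϑ (x : Spx (n+1)).2⟩ : Spx (n+1)) ∈ S),
      ((φ ⟨⟨fun i => (x : Spx (n+1)).1 (ϑ i), perm_mem ϑ (x : Spx (n+1)).2⟩, h⟩ : Spx (n+1)).1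
        = fun i => ((φ x : Spx (n+1)).1 (ϑ i)))) ∧
  (∀ (x : ↥S) (i j : Fin (n+1)),
      (x : Spx (n+1)).1 i ≤ (x : Spx (n+1)).1 j →
      (φ x : Spx (n+1)).1 i ≤ (φ x : Spx (n+1)).1 j)

namespace St14

variable {n : ℕ}

lemma bou_perm {n : ℕ} (ϑ : Equiv.Perm (Fin (n+1))) {x : Spx (n+1)} (hx : x ∈ bou n) :
    (⟨fun i => x.1 (ϑ i), perm_mem ϑ x.2⟩ : Spx (n+1)) ∈ bou n := by
  obtain ⟨j, hj⟩ : ∃ j, x.1 j = 0 := hx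
  exact ⟨ϑ.symm j, by simp [hj]⟩

variable {n : ℕ}

lemma eq_iff (φ : ↥(bou n) ≃ₜ ↥(bou n)) (hφ : ComfortOn ⇑φ)
    (b : ↥(bou n)) (i j : Fin (n+1)) :
    b.1.1 i = b.1.1 j ↔ (φ b).1.1 i = (φ b).1.1 j := by
  constructor
  · intro h
    exact le_antisymm (hφ.2 b i j h.le) (hφ.2 b j i h.ge)
  · intro h
    have hmem := bou_perm (Equiv.swap i j) b.2
    have hp := hφ.1 (Equiv.swap i j) b hmem
    have h2 : (fun k => (φ b).1.1 (Equiv.swap i j k)) = (φ b).1.1 := by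
      funext k
      rcases eq_or_ne k i with rfl | hki
      · simpa [Equiv.swap_apply_left] using h.symm
      rcases eq_or_ne k j with rfl | hkj
      · simpa [Equiv.swap_apply_right] using h
      · simp [Equiv.swap_apply_of_ne_of_ne hki hkj]
    have h3 : φ ⟨⟨fun k => b.1.1 (Equiv.swap i j k), perm_mem (Equiv.swap i j) b.1.2⟩, hmem⟩
        = φ b := by
      apply Subtype.ext; apply Subtype.ext
      exact hp.trans h2
    have h4 := φ.injective h3
    have h5 : b.1.1 (Equiv.swap i j i) = b.1.1 i := by
      have := congrArg (fun z : ↥(bou n) => z.1.1 i) h4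
      simpa using this
    rw [Equiv.swap_apply_left] at h5
    exact h5.symm

lemma le_iff (φ : ↥(bou n) ≃ₜ ↥(bou n)) (hφ : ComfortOn ⇑φ)
    (b : ↥(bou n)) (i j : Fin (n+1)) :
    b.1.1 i ≤ b.1.1 j ↔ (φ b).1.1 i ≤ (φ b).1.1 j := by
  constructor
  · exact hφ.2 b i j
  · intro h
    by_contra hlt
    push_neg at hlt
    have h2 := hφ.2 b j i hlt.le
    have h3 : (φ b).1.1 i = (φ b).1.1 j := le_antisymm h h2
    have h4 := (eq_iff φ hφ b i j).mpr h3
    rw [h4] at hlt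
    exact lt_irrefl _ hlt

lemma zero_iff (φ : ↥(bou n) ≃ₜ ↥(bou n)) (hφ : ComfortOn ⇑φ)
    (b : ↥(bou n)) (k : Fin (n+1)) :
    b.1.1 k = 0 ↔ (φ b).1.1 k = 0 := by
  have fwd : ∀ (x : ↥(bou n)) (k : Fin (n+1)), x.1.1 k = 0 → (φ x).1.1 k = 0 := by
    intro x k hk
    obtain ⟨j', hj'⟩ : ∃ j, (φ x).1.1 j = 0 := (φ x).2
    have h1 : ∀ l, x.1.1 k ≤ x.1.1 l := fun l => hk ▸ x.1.2.1 l
    have h2 : (φ x).1.1 k ≤ (φ x).1.1 j' := hφ.2 x k j' (h1 j')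
    have h3 : 0 ≤ (φ x).1.1 k := (φ x).1.2.1 k
    rw [hj'] at h2
    linarith
  constructor
  · exact fwd b k
  · intro hk
    obtain ⟨j, hj⟩ : ∃ j, b.1.1 j = 0 := b.2
    have hcj : (φ b).1.1 j = 0 := fwd b j hj
    have : (φ b).1.1 k = (φ b).1.1 j := by rw [hk, hcj]
    have := (eq_iff φ hφ b k j).mpr this
    rw [this, hj]

lemma exists_max (x : Spx (n+1)) :
    ∃ k, (∀ l, x.1 l ≤ x.1 k) ∧ 1/((n:ℝ)+1) ≤ x.1 k := by
  obtain ⟨k, hk⟩ := Finite.exists_max x.1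
  refine ⟨k, hk, ?_⟩
  have hsum := x.2.2
  have h1 : (1:ℝ) ≤ ((n:ℝ)+1) * x.1 k := by
    have h2 : ∑ l, x.1 l ≤ ∑ _l : Fin (n+1), x.1 k :=
      Finset.sum_le_sum fun l _ => hk l
    rw [hsum] at h2
    rw [Finset.sum_const, Finset.card_univ, Fintype.card_fin, nsmul_eq_mul] at h2
    push_cast at h2
    linarith
  rw [div_le_iff₀ (by positivity)]
  linarith

lemma comfort_symm (φ : ↥(bou n) ≃ₜ ↥(bou n)) (hφ : ComfortOn ⇑φ) :
    ComfortOn ⇑φ.symm := by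
  constructor
  · intro ϑ y h
    set x := φ.symm y with hx
    have hmem : (⟨fun i => x.1.1 (ϑ i), perm_mem ϑ x.1.2⟩ : Spx (n+1)) ∈ bou n :=
      bou_perm ϑ x.2
    have hp := hφ.1 ϑ x hmem
    have hyx : φ x = y := φ.apply_symm_apply y
    have h3 : φ ⟨⟨fun i => x.1.1 (ϑ i), perm_mem ϑ x.1.2⟩, hmem⟩
        = ⟨⟨fun i => y.1.1 (ϑ i), perm_mem ϑ y.1.2⟩, h⟩ := by
      apply Subtype.ext; apply Subtype.ext
      rw [hp, hyx]
    have h4 := congrArg φ.symm h3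
    rw [φ.symm_apply_apply] at h4
    rw [← h4]
  · intro y i j hle
    by_contra hlt
    push_neg at hlt
    have key : φ (φ.symm y) = y := φ.apply_symm_apply y
    have h2 := hφ.2 (φ.symm y) j i hlt.le
    rw [key] at h2
    have h3 : y.1.1 i = y.1.1 j := le_antisymm hle h2
    have h4 : (φ (φ.symm y)).1.1 i = (φ (φ.symm y)).1.1 j := by rw [key]; exact h3
    have h5 := (eq_iff φ hφ (φ.symm y) i j).mpr h4
    rw [h5] at hlt
    exact lt_irrefl _ hlt


lemma keyD (φ : ↥(bou n) ≃ₜ ↥(bou n)) (hφ : ComfortOn ⇑φ)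
    {α β : ℝ} (hα1 : α < 1/((n:ℝ)+1)) (hβ0 : 0 < β)
    (hcross : ∀ x : ↥(bou n),
      (x : Spx (n+1)) ∈ cross n α ↔ (φ x : Spx (n+1)) ∈ cross n β)
    (b : ↥(bou n)) (hb : (b : Spx (n+1)) ∉ cross n α)
    (i : Fin (n+1)) (hi : b.1.1 i < α) :
    (φ b).1.1 i < β := by
  classical
  by_contra hge
  push_neg at hge
  have hcb : (φ b : Spx (n+1)) ∉ cross n β := fun h => hb ((hcross b).mpr h)
  have hne : (φ b).1.1 i ≠ β := fun h => hcb ⟨i, h⟩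
  have hgt : β < (φ b).1.1 i := lt_of_le_of_ne hge (Ne.symm hne)
  obtain ⟨k₁, hk₁, hk₁v⟩ := exists_max b.1
  have hαk : α < b.1.1 k₁ := lt_of_lt_of_le hα1 hk₁v
  have hik : i ≠ k₁ := by intro h; rw [h] at hi; linarith
  set σ : ℝ → ℝ := fun s => max 0 (min s 1) with hσdef
  have hσc : Continuous σ := continuous_const.max (continuous_id.min continuous_const)
  have hσ0 : ∀ s, 0 ≤ σ s := fun s => le_max_left _ _
  have hσ1 : ∀ s, σ s ≤ 1 := fun s => max_le (by norm_num) (min_le_right _ _)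
  set w : Fin (n+1) → ℝ :=
    fun k => (if k = i then -(b.1.1 i) else 0) + (if k = k₁ then b.1.1 i else 0) with hwdef
  set f : ℝ → Fin (n+1) → ℝ := fun s k => b.1.1 k + σ s * w k with hfdef
  have hwsum : ∑ k, w k = 0 := by
    rw [hwdef]
    rw [Finset.sum_add_distrib]
    simp [Finset.sum_ite_eq']
  have hfi : ∀ s, f s i = (1 - σ s) * b.1.1 i := by
    intro s; simp only [hfdef, hwdef, if_pos rfl, if_neg hik, if_true]; ring
  have hfk₁ : ∀ s, f s k₁ = b.1.1 k₁ + σ s * b.1.1 i := by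
    intro s; simp only [hfdef, hwdef, if_neg (Ne.symm hik), if_pos rfl, if_true]; ring
  have hfo : ∀ s k, k ≠ i → k ≠ k₁ → f s k = b.1.1 k := by
    intro s k h1 h2; simp only [hfdef, hwdef, if_neg h1, if_neg h2]; ring
  have hbi0 : 0 ≤ b.1.1 i := b.1.2.1 i
  have hmem : ∀ s, f s ∈ stdSimplex ℝ (Fin (n+1)) := by
    intro s
    constructor
    · intro k
      rcases eq_or_ne k i with rfl | h1
      · rw [hfi]; nlinarith [hσ1 s]
      rcases eq_or_ne k k₁ with rfl | h2
      · rw [hfk₁]; nlinarith [hσ0 s, b.1.2.1 k]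
      · rw [hfo s k h1 h2]; exact b.1.2.1 k
    · have : ∑ k, f s k = (∑ k, b.1.1 k) + σ s * ∑ k, w k := by
        rw [hfdef, Finset.sum_add_distrib, Finset.mul_sum]
      rw [this, hwsum, b.1.2.2]; ring
  have hbou : ∀ s, (⟨f s, hmem s⟩ : Spx (n+1)) ∈ bou n := by
    obtain ⟨k₀, hk₀⟩ : ∃ k, b.1.1 k = 0 := b.2
    intro s
    refine ⟨k₀, ?_⟩
    show f s k₀ = 0
    rcases eq_or_ne k₀ i with rfl | h1
    · rw [hfi, hk₀]; ring
    have h2 : k₀ ≠ k₁ := by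
      intro h; rw [h] at hk₀; rw [hk₀] at hk₁v
      have : (0:ℝ) < 1/((n:ℝ)+1) := by positivity
      linarith
    rw [hfo s k₀ h1 h2]; exact hk₀
  set path : ℝ → ↥(bou n) := fun s => ⟨⟨f s, hmem s⟩, hbou s⟩ with hpathdef
  have hpc : Continuous path := by
    apply Continuous.subtype_mk
    apply Continuous.subtype_mk
    apply continuous_pi
    intro k
    exact continuous_const.add (hσc.mul continuous_const)
  have hnc : ∀ s, (path s : Spx (n+1)) ∉ cross n α := by
    rintro s ⟨k, hk⟩
    have hk' : f s k = α := hk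
    rcases eq_or_ne k i with rfl | h1
    · rw [hfi] at hk'; nlinarith [hσ0 s, hσ1 s]
    rcases eq_or_ne k k₁ with rfl | h2
    · rw [hfk₁] at hk'; nlinarith [hσ0 s]
    · rw [hfo s k h1 h2] at hk'; exact hb ⟨k, hk'⟩
  set g : ℝ → ℝ := fun s => (φ (path s)).1.1 i - β with hgdef
  have hgc : Continuous g := by
    apply Continuous.sub _ continuous_const
    exact (continuous_apply i).comp
      (continuous_subtype_val.comp (continuous_subtype_val.comp (φ.continuous.comp hpc)))
  have hgne : ∀ s, g s ≠ 0 := by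
    intro s h0
    have h1 : (φ (path s) : Spx (n+1)) ∉ cross n β :=
      fun hc => (hnc s) ((hcross (path s)).mpr hc)
    exact h1 ⟨i, by rw [hgdef] at h0; simp at h0; linarith⟩
  have hpath0 : path 0 = b := by
    apply Subtype.ext; apply Subtype.ext; funext k
    have : σ 0 = 0 := by simp [hσdef]
    show f 0 k = b.1.1 k
    rw [hfdef]; simp [this]
  have hg0 : 0 < g 0 := by
    rw [hgdef]; simp only; rw [hpath0]; linarith
  have hg1 : g 1 < 0 := by
    have hσ1' : σ 1 = 1 := by simp [hσdef]
    have hz : (path 1).1.1 i = 0 := by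
      show f 1 i = 0
      rw [hfi, hσ1']; ring
    have := (zero_iff φ hφ (path 1) i).mp hz
    rw [hgdef]; simp only; rw [this]; linarith
  have h01 : (0:ℝ) ≤ 1 := by norm_num
  have := intermediate_value_Icc' h01 hgc.continuousOn
  have h0mem : (0:ℝ) ∈ Set.Icc (g 1) (g 0) := ⟨hg1.le, hg0.le⟩
  obtain ⟨s, _, hgs⟩ := this h0mem
  exact hgne s hgs


lemma cross_symm (φ : ↥(bou n) ≃ₜ ↥(bou n)) {α β : ℝ}
    (hcross : ∀ x : ↥(bou n),
      (x : Spx (n+1)) ∈ cross n α ↔ (φ x : Spx (n+1)) ∈ cross n β) :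
    ∀ y : ↥(bou n),
      (y : Spx (n+1)) ∈ cross n β ↔ (φ.symm y : Spx (n+1)) ∈ cross n α := by
  intro y
  have := hcross (φ.symm y)
  rw [φ.apply_symm_apply] at this
  exact this.symm

lemma keyE (φ : ↥(bou n) ≃ₜ ↥(bou n)) (hφ : ComfortOn ⇑φ)
    {α β : ℝ} (hα0 : 0 < α) (hα1 : α < 1/((n:ℝ)+1))
    (hβ0 : 0 < β) (hβ1 : β < 1/((n:ℝ)+1))
    (hcross : ∀ x : ↥(bou n),
      (x : Spx (n+1)) ∈ cross n α ↔ (φ x : Spx (n+1)) ∈ cross n β)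
    (b : ↥(bou n)) (j : Fin (n+1)) (hj : b.1.1 j = α) :
    (φ b).1.1 j = β := by
  classical
  have hφs := comfort_symm φ hφ
  have hcs := cross_symm φ hcross
  obtain ⟨k₁, hk₁, hk₁v⟩ := exists_max b.1
  have hαk : α < b.1.1 k₁ := lt_of_lt_of_le hα1 hk₁v
  have hk₁α : b.1.1 k₁ ≠ α := ne_of_gt hαk
  set J : Finset (Fin (n+1)) := Finset.univ.filter (fun k => b.1.1 k = α) with hJdef
  set m : ℕ := J.card with hmdef
  have hjJ : j ∈ J := by simp [hJdef, hj]
  have hm1 : 1 ≤ m := Finset.card_pos.mpr ⟨j, hjJ⟩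
  have hm1' : (1:ℝ) ≤ (m:ℝ) := by exact_mod_cast hm1
  set ε : ℝ := min α ((b.1.1 k₁ - α)/((m:ℝ)+1)) with hεdef
  have hε0 : 0 < ε := lt_min hα0 (div_pos (by linarith) (by linarith))
  have hεα : ε ≤ α := min_le_left _ _
  have hεm : ε * ((m:ℝ)+1) ≤ b.1.1 k₁ - α := by
    have h := min_le_right α ((b.1.1 k₁ - α)/((m:ℝ)+1))
    rw [le_div_iff₀ (by linarith : (0:ℝ) < (m:ℝ)+1)] at h
    exact h
  set τ : ℝ → ℝ := fun t => max (-ε) (min t ε) with hτdef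
  have hτc : Continuous τ := continuous_const.max (continuous_id.min continuous_const)
  have hτlb : ∀ t, -ε ≤ τ t := fun t => le_max_left _ _
  have hτub : ∀ t, τ t ≤ ε := fun t => max_le (by linarith) (min_le_right _ _)
  have hτmb : ∀ t, τ t * (m:ℝ) < b.1.1 k₁ - α := by
    intro t
    have h1 : τ t * (m:ℝ) ≤ ε * (m:ℝ) :=
      mul_le_mul_of_nonneg_right (hτub t) (Nat.cast_nonneg m)
    have h2 : ε * ((m:ℝ)+1) = ε * (m:ℝ) + ε := by ring
    linarith
  set v : Fin (n+1) → ℝ :=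
    fun k => (if b.1.1 k = α then 1 else 0) - (if k = k₁ then (m:ℝ) else 0) with hvdef
  set f : ℝ → Fin (n+1) → ℝ := fun t k => b.1.1 k + τ t * v k with hfdef
  have hvsum : ∑ k, v k = 0 := by
    rw [hvdef]
    rw [Finset.sum_sub_distrib]
    rw [Finset.sum_boole]
    simp [Finset.sum_ite_eq', hJdef, hmdef]
  have hfJ : ∀ t k, b.1.1 k = α → f t k = α + τ t := by
    intro t k hk
    have hkk₁ : k ≠ k₁ := fun h => hk₁α (h ▸ hk)
    simp only [hfdef, hvdef, if_pos hk, if_neg hkk₁, hk, if_true]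
    ring
  have hfk₁ : ∀ t, f t k₁ = b.1.1 k₁ - τ t * (m:ℝ) := by
    intro t
    simp only [hfdef, hvdef, if_neg hk₁α, if_pos rfl, if_true]
    ring
  have hfo : ∀ t k, b.1.1 k ≠ α → k ≠ k₁ → f t k = b.1.1 k := by
    intro t k h1 h2
    simp only [hfdef, hvdef, if_neg h1, if_neg h2]
    ring
  have hfk₁gt : ∀ t, α < f t k₁ := by
    intro t
    rw [hfk₁]
    have := hτmb t
    linarith
  have hmem : ∀ t, f t ∈ stdSimplex ℝ (Fin (n+1)) := by
    intro t
    constructor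
    · intro k
      rcases eq_or_ne k k₁ with rfl | h2
      · linarith [hfk₁gt t, hα0]
      rcases eq_or_ne (b.1.1 k) α with h1 | h1
      · rw [hfJ t k h1]
        linarith [hτlb t]
      · rw [hfo t k h1 h2]
        exact b.1.2.1 k
    · have : ∑ k, f t k = (∑ k, b.1.1 k) + τ t * ∑ k, v k := by
        rw [hfdef, Finset.sum_add_distrib, Finset.mul_sum]
      rw [this, hvsum, b.1.2.2]; ring
  have hbou : ∀ t, (⟨f t, hmem t⟩ : Spx (n+1)) ∈ bou n := by
    obtain ⟨k₀, hk₀⟩ : ∃ k, b.1.1 k = 0 := b.2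
    intro t
    refine ⟨k₀, ?_⟩
    show f t k₀ = 0
    have h1 : b.1.1 k₀ ≠ α := by rw [hk₀]; exact (ne_of_lt hα0)
    have h2 : k₀ ≠ k₁ := by
      intro h; rw [h] at hk₀; rw [hk₀] at hαk; linarith
    rw [hfo t k₀ h1 h2]; exact hk₀
  set path : ℝ → ↥(bou n) := fun t => ⟨⟨f t, hmem t⟩, hbou t⟩ with hpathdef
  have hpc : Continuous path := by
    apply Continuous.subtype_mk
    apply Continuous.subtype_mk
    apply continuous_pi
    intro k
    exact continuous_const.add (hτc.mul continuous_const)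
  have hnc : ∀ t, τ t ≠ 0 → (path t : Spx (n+1)) ∉ cross n α := by
    rintro t ht ⟨k, hk⟩
    have hk' : f t k = α := hk
    rcases eq_or_ne k k₁ with rfl | h2
    · exact absurd hk' (ne_of_gt (hfk₁gt t))
    rcases eq_or_ne (b.1.1 k) α with h1 | h1
    · rw [hfJ t k h1] at hk'
      exact ht (by linarith)
    · rw [hfo t k h1 h2] at hk'
      exact h1 hk'
  have hpj : ∀ t, (path t).1.1 j = α + τ t := fun t => hfJ t j hj
  have hpos : ∀ t, 0 < τ t → β < (φ (path t)).1.1 j := by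
    intro t ht
    have hncb : (φ (path t) : Spx (n+1)) ∉ cross n β :=
      fun hc => (hnc t (ne_of_gt ht)) ((hcross (path t)).mpr hc)
    have hne : (φ (path t)).1.1 j ≠ β := fun h => hncb ⟨j, h⟩
    rcases lt_or_gt_of_ne hne with hlt | hgt
    · exfalso
      have := keyD φ.symm hφs hβ1 hα0 hcs (φ (path t)) hncb j hlt
      rw [φ.symm_apply_apply] at this
      rw [hpj t] at this
      linarith
    · exact hgt
  have hneg : ∀ t, τ t < 0 → (φ (path t)).1.1 j < β := by
    intro t ht
    exact keyD φ hφ hα1 hβ0 hcross (path t) (hnc t (ne_of_lt ht)) j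
      (by rw [hpj t]; linarith)
  set G : ℝ → ℝ := fun t => (φ (path t)).1.1 j - β with hGdef
  have hGc : Continuous G := by
    apply Continuous.sub _ continuous_const
    exact (continuous_apply j).comp
      (continuous_subtype_val.comp (continuous_subtype_val.comp (φ.continuous.comp hpc)))
  have hτε : τ ε = ε := by
    show max (-ε) (min ε ε) = ε
    rw [min_self]
    exact max_eq_right (by linarith)
  have hτnε : τ (-ε) = -ε := by
    show max (-ε) (min (-ε) ε) = -ε
    rw [min_eq_left (by linarith : -ε ≤ ε)]
    exact max_self _
  have hGpos : 0 < G ε := by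
    have := hpos ε (by rw [hτε]; exact hε0)
    rw [hGdef]; simp only; linarith
  have hGneg : G (-ε) < 0 := by
    have := hneg (-ε) (by rw [hτnε]; linarith)
    rw [hGdef]; simp only; linarith
  have hle : (-ε : ℝ) ≤ ε := by linarith
  obtain ⟨t₀, ht₀mem, hGt₀⟩ :=
    intermediate_value_Icc hle hGc.continuousOn ⟨hGneg.le, hGpos.le⟩
  have hτt₀ : τ t₀ = t₀ := by
    show max (-ε) (min t₀ ε) = t₀
    rw [min_eq_left ht₀mem.2]
    exact max_eq_right ht₀mem.1
  have ht₀0 : t₀ = 0 := by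
    rcases lt_trichotomy t₀ 0 with h | h | h
    · exfalso
      have := hneg t₀ (by rw [hτt₀]; exact h)
      rw [hGdef] at hGt₀; simp only at hGt₀
      linarith
    · exact h
    · exfalso
      have := hpos t₀ (by rw [hτt₀]; exact h)
      rw [hGdef] at hGt₀; simp only at hGt₀
      linarith
  have hpath0 : path 0 = b := by
    apply Subtype.ext; apply Subtype.ext; funext k
    have hτ0 : τ 0 = 0 := by
      show max (-ε) (min 0 ε) = 0
      rw [min_eq_left hε0.le]
      exact max_eq_right (by linarith)
    show f 0 k = b.1.1 k
    rw [hfdef]; simp [hτ0]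
  rw [ht₀0] at hGt₀
  rw [hGdef] at hGt₀; simp only at hGt₀
  rw [hpath0] at hGt₀
  linarith


end St14

theorem boundary_comfort_component_relations (n : ℕ) (hn : 1 ≤ n) (α β : ℝ)
    (hα0 : 0 < α) (hα1 : α < 1/((n:ℝ)+1))
    (hβ0 : 0 < β) (hβ1 : β < 1/((n:ℝ)+1))
    (φ : ↥(bou n) ≃ₜ ↥(bou n)) (hφ : ComfortOn ⇑φ)
    (hcross : ∀ x : ↥(bou n),
      (x : Spx (n+1)) ∈ cross n α ↔ (φ x : Spx (n+1)) ∈ cross n β) :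
    ∀ (b : ↥(bou n)) (i j : Fin (n+1)),
      ((b : Spx (n+1)).1 i = α ↔ (φ b : Spx (n+1)).1 i = β) ∧
      ((b : Spx (n+1)).1 i ≤ α ↔ (φ b : Spx (n+1)).1 i ≤ β) ∧
      ((b : Spx (n+1)).1 i = (b : Spx (n+1)).1 j ↔
        (φ b : Spx (n+1)).1 i = (φ b : Spx (n+1)).1 j) := by
  classical
  have hφs := St14.comfort_symm φ hφ
  have hcs := St14.cross_symm φ hcross
  have hlev : ∀ (b : ↥(bou n)) (i : Fin (n+1)), b.1.1 i = α ↔ (φ b).1.1 i = β := by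
    intro b i
    constructor
    · exact fun h => St14.keyE φ hφ hα0 hα1 hβ0 hβ1 hcross b i h
    · intro h
      have hbc : (b : Spx (n+1)) ∈ cross n α := (hcross b).mpr ⟨i, h⟩
      obtain ⟨j', hj'⟩ : ∃ j', b.1.1 j' = α := hbc
      have hc' : (φ b).1.1 j' = β := St14.keyE φ hφ hα0 hα1 hβ0 hβ1 hcross b j' hj'
      have h1 : (φ b).1.1 i = (φ b).1.1 j' := by rw [h, hc']
      have h2 := (St14.eq_iff φ hφ b i j').mpr h1
      rw [h2, hj']
  intro b i j
  refine ⟨hlev b i, ?_, St14.eq_iff φ hφ b i j⟩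
  by_cases hbc : (b : Spx (n+1)) ∈ cross n α
  · obtain ⟨j₀, hj₀⟩ : ∃ j₀, b.1.1 j₀ = α := hbc
    have hcj₀ : (φ b).1.1 j₀ = β := (hlev b j₀).mp hj₀
    constructor
    · intro h
      have h1 : b.1.1 i ≤ b.1.1 j₀ := by rw [hj₀]; exact h
      have h2 := (St14.le_iff φ hφ b i j₀).mp h1
      rw [hcj₀] at h2; exact h2
    · intro h
      have h1 : (φ b).1.1 i ≤ (φ b).1.1 j₀ := by rw [hcj₀]; exact h
      have h2 := (St14.le_iff φ hφ b i j₀).mpr h1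
      rw [hj₀] at h2; exact h2
  · have hne : b.1.1 i ≠ α := fun h => hbc ⟨i, h⟩
    have hcb : (φ b : Spx (n+1)) ∉ cross n β := fun h => hbc ((hcross b).mpr h)
    have hcne : (φ b).1.1 i ≠ β := fun h => hcb ⟨i, h⟩
    constructor
    · intro h
      exact (St14.keyD φ hφ hα1 hβ0 hcross b hbc i (lt_of_le_of_ne h hne)).le
    · intro h
      have h2 : (φ b).1.1 i < β := lt_of_le_of_ne h hcne
      have h3 := St14.keyD φ.symm hφs hβ1 hα0 hcs (φ b) hcb i h2
      rw [φ.symm_apply_apply] at h3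
      exact h3.le

end
end

section
/- Let n ≥ 1, let α satisfy 0 < α < 1/(n+1), and let b ∈ BOU_n. Let [Center_n, b] := {t·Center_n + (1−t)·b : t ∈ [0,1]}. Then the set [Center_n, b] ∩ ♣_{n,α} is finite and its cardinality equals the number of distinct values among those components b_i of b with b_i ≤ α; in particular the intersection is nonempty. -/
open scoped BigOperators

noncomputable section

/-- the straight line segment `[Center_n, b]` inside `Δ_n`. -/
def segCenter (n : ℕ) (b : Spx (n+1)) : Set (Spx (n+1)) :=
  {x | ∃ t : ℝ, t ∈ Set.Icc (0:ℝ) 1 ∧ x.1 = t • (center n).1 + (1-t) • b.1}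

theorem segment_cross_intersection_card (n : ℕ) (hn : 1 ≤ n) (α : ℝ)
    (hα0 : 0 < α) (hα1 : α < 1/((n:ℝ)+1))
    (b : Spx (n+1)) (hb : b ∈ bou n) :
    (segCenter n b ∩ cross n α).Finite ∧
    (segCenter n b ∩ cross n α).ncard
      = {v : ℝ | v ≤ α ∧ ∃ i : Fin (n+1), b.1 i = v}.ncard ∧
    (segCenter n b ∩ cross n α).Nonempty := by
  obtain ⟨k, hk⟩ := hb
  set c : ℝ := 1/((n:ℝ)+1) with hcdef
  have hc0 : 0 < c := by positivity
  have hcα : α < c := hα1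
  set V : Set ℝ := {v : ℝ | v ≤ α ∧ ∃ i : Fin (n+1), b.1 i = v} with hVdef
  have hVfin : V.Finite := (Set.finite_range b.1).subset (by
    rintro v ⟨_, i, hi⟩; exact ⟨i, hi⟩)
  set f : ℝ → ℝ := fun v => (α - v)/(c - v) with hfdef
  have hficc : ∀ v ∈ V, f v ∈ Set.Icc (0:ℝ) 1 := by
    rintro v ⟨hvα, i, hi⟩
    have hv0 : 0 ≤ v := hi ▸ b.2.1 i
    have hcv : 0 < c - v := by linarith
    constructor
    · apply div_nonneg <;> linarith
    · rw [div_le_one hcv]; linarith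
  set t : ℝ → ℝ := fun v => max 0 (min 1 (f v)) with htdef
  have htV : ∀ v ∈ V, t v = f v := by
    intro v hv
    obtain ⟨h0, h1⟩ := hficc v hv
    simp only [htdef, min_eq_right h1, max_eq_right h0]
  have hticc : ∀ v, t v ∈ Set.Icc (0:ℝ) 1 := by
    intro v
    exact ⟨le_max_left _ _, max_le (by norm_num) (min_le_left _ _)⟩
  have hmem : ∀ v : ℝ, (t v) • (center n).1 + (1 - t v) • b.1 ∈ stdSimplex ℝ (Fin (n+1)) := by
    intro v
    exact (convex_stdSimplex ℝ (Fin (n+1))) (center n).2 b.2 (hticc v).1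
      (by linarith [(hticc v).2]) (by ring)
  set g : ℝ → Spx (n+1) := fun v => ⟨(t v) • (center n).1 + (1 - t v) • b.1, hmem v⟩
    with hgdef
  have hgcoord : ∀ v (j : Fin (n+1)), (g v).1 j = t v * c + (1 - t v) * b.1 j := by
    intro v j; rfl
  have hcent : ∀ j : Fin (n+1), (center n).1 j = c := fun _ => rfl
  -- the key identity
  have hSeq : segCenter n b ∩ cross n α = g '' V := by
    ext x
    constructor
    · rintro ⟨⟨s, hs, hxs⟩, j, hxj⟩
      have hbj0 : 0 ≤ b.1 j := b.2.1 j
      have heq : s * c + (1 - s) * b.1 j = α := by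
        rw [hxs] at hxj
        simpa [hcent] using hxj
      set v := b.1 j with hvdef
      have hvα : v ≤ α := by
        by_contra hlt
        push_neg at hlt
        rcases eq_or_lt_of_le hs.1 with hs0 | hs0
        · rw [← hs0] at heq; simp at heq; linarith
        · nlinarith [mul_pos hs0 (by linarith : (0:ℝ) < c - α),
            mul_nonneg (by linarith [hs.2] : (0:ℝ) ≤ 1 - s) (by linarith : (0:ℝ) ≤ v - α)]
      have hvV : v ∈ V := ⟨hvα, j, rfl⟩
      have hcv : 0 < c - v := by linarith
      have hsf : s = f v := by
        rw [hfdef]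
        rw [eq_div_iff (ne_of_gt hcv)]
        linarith [heq]
      refine ⟨v, hvV, ?_⟩
      apply Subtype.ext
      rw [hxs]
      show (t v) • (center n).1 + (1 - t v) • b.1 = _
      rw [htV v hvV, ← hsf]
    · rintro ⟨v, hvV, rfl⟩
      obtain ⟨hvα, i, hi⟩ := hvV
      have hv0 : 0 ≤ v := hi ▸ b.2.1 i
      have hcv : 0 < c - v := by linarith
      refine ⟨⟨t v, hticc v, rfl⟩, i, ?_⟩
      rw [hgcoord, hi, htV v ⟨hvα, i, hi⟩]
      have hmul : f v * (c - v) = α - v := div_mul_cancel₀ _ (ne_of_gt hcv)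
      linarith [hmul]
  have hginj : Set.InjOn g V := by
    intro v hv w hw hgvw
    have h1 : (g v).1 k = (g w).1 k := by rw [hgvw]
    rw [hgcoord, hgcoord, hk] at h1
    have hfvw : f v = f w := by
      rw [htV v hv, htV w hw] at h1
      have := mul_right_cancel₀ (ne_of_gt hc0) (by linarith [h1] : f v * c = f w * c)
      exact this
    obtain ⟨hvα, i, hi⟩ := hv
    obtain ⟨hwα, i', hi'⟩ := hw
    have hv0 : 0 ≤ v := hi ▸ b.2.1 i
    have hw0 : 0 ≤ w := hi' ▸ b.2.1 i'
    have hcv : 0 < c - v := by linarith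
    have hcw : 0 < c - w := by linarith
    have hcross : (α - v) * (c - w) = (α - w) * (c - v) :=
      (div_eq_div_iff (ne_of_gt hcv) (ne_of_gt hcw)).mp hfvw
    have hz : (v - w) * (α - c) = 0 := by linear_combination hcross
    rcases mul_eq_zero.mp hz with h | h
    · linarith
    · exfalso; linarith
  have hfin : (segCenter n b ∩ cross n α).Finite := by
    rw [hSeq]; exact hVfin.image g
  refine ⟨hfin, ?_, ?_⟩
  · rw [hSeq, Set.ncard_image_of_injOn hginj]
  · rw [hSeq]
    exact ⟨g 0, 0, ⟨le_of_lt hα0, k, hk⟩, rfl⟩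

end
end

section
/- For every n ≥ 1 there exists an injective group homomorphism Λ_n from the group (under composition) of increasing homeomorphisms of the interval [0, 1/(n+1)] onto itself into the group of homeomorphisms of Δ_n, such that every Λ_n(f) lies in COMFORT(Δ_n) and satisfies: for every x ∈ Δ_n and every index i with x_i ≤ 1/(n+1), (Λ_n(f)(x))_i = f(x_i). -/
open scoped BigOperators

noncomputable section

/-!
Write `c = 1/(n+1)`. `Λ_n(f)` moves every coordinate `t ≤ c` of `x` to `f(t)` and every
coordinate `t > c` to `c + r (t - c)`, with one common factor `r ≥ 0` for all of them. The
condition that the coordinates sum to `1` determines `r`, so a point of `Δ_n` of this shape is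
unique; hence `Λ_n(g) ∘ Λ_n(f) = Λ_n(g ∘ f)` (the factors multiply) and `Λ_n(id) = id` (with
`r = 1`). At the barycentre, the only point without coordinates above `c`, continuity comes
from `r (t - c) ≤ Σ_{x_j ≤ c} (c - f(x_j))`, which tends to `0` there. Injectivity holds because
for `n ≥ 1` every `t ∈ [0, c]` is a coordinate of some point of `Δ_n`.
-/

open Set Finset Function

namespace Comfort

section Interval

variable {c : ℝ} (hc : 0 ≤ c) (f g : Icc 0 c ≃o Icc 0 c)

def extend : ℝ → ℝ := IccExtend hc (Subtype.val ∘ f)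

lemma extend_mem (t : ℝ) : extend hc f t ∈ Icc 0 c := (f _).2

lemma extend_of_mem {t : ℝ} (ht : t ∈ Icc 0 c) : extend hc f t = f ⟨t, ht⟩ :=
  IccExtend_of_mem hc _ ht

lemma extend_of_right_le {t : ℝ} (ht : c ≤ t) : extend hc f t = c := by
  have : Fact (0 ≤ c) := ⟨hc⟩
  rw [extend, IccExtend_of_right_le hc _ ht]
  exact congrArg Subtype.val f.map_top

lemma extend_extend (t : ℝ) : extend hc g (extend hc f t) = extend hc (f.trans g) t :=
  IccExtend_val hc _ _

lemma continuous_extend : Continuous (extend hc f) :=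
  (continuous_subtype_val.comp f.continuous).Icc_extend'

lemma monotone_extend : Monotone (extend hc f) :=
  Monotone.IccExtend hc ((Subtype.mono_coe _).comp f.monotone)

def stretch (r t : ℝ) : ℝ := extend hc f t + r * (t - c)⁺

variable {hc f g} {r s t : ℝ}

lemma stretch_of_le (ht : t ≤ c) : stretch hc f r t = extend hc f t := by
  rw [stretch, posPart_eq_zero.2 (sub_nonpos.2 ht), mul_zero, add_zero]

lemma stretch_of_ge (ht : c ≤ t) : stretch hc f r t = c + r * (t - c) := by
  rw [stretch, extend_of_right_le hc f ht, posPart_eq_self.2 (sub_nonneg.2 ht)]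

lemma stretch_stretch (hr : 0 ≤ r) :
    stretch hc g s (stretch hc f r t) = stretch hc (f.trans g) (r * s) t := by
  rcases le_total t c with htc | hct
  · rw [stretch_of_le htc, stretch_of_le (extend_mem hc f t).2, stretch_of_le htc,
      extend_extend]
  · have : c ≤ stretch hc f r t := by
      rw [stretch_of_ge hct]
      nlinarith
    rw [stretch_of_ge this, stretch_of_ge hct, stretch_of_ge hct]
    ring

lemma stretch_refl_one (ht : 0 ≤ t) : stretch hc (OrderIso.refl (Icc 0 c)) 1 t = t := by
  rcases le_total t c with htc | hct
  · rw [stretch_of_le htc, extend_of_mem hc _ ⟨ht, htc⟩]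
    rfl
  · rw [stretch_of_ge hct]
    ring

lemma monotone_stretch (hr : 0 ≤ r) : Monotone (stretch hc f r) := fun _ _ hst =>
  add_le_add (monotone_extend hc f hst)
    (mul_le_mul_of_nonneg_left (posPart_mono (sub_le_sub_right hst c)) hr)

end Interval

section Simplex

variable {ι : Type*} [Fintype ι] {c : ℝ}

def excess (c : ℝ) (x : ι → ℝ) : ℝ := ∑ i, (x i - c)⁺

def deficit (hc : 0 ≤ c) (f : Icc 0 c ≃o Icc 0 c) (x : ι → ℝ) : ℝ :=
  ∑ i, (c - extend hc f (x i))

lemma c_nonneg (hι : (Fintype.card ι : ℝ) * c = 1) : 0 ≤ c :=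
  (pos_of_mul_pos_right (hι ▸ one_pos) (Nat.cast_nonneg _)).le

/-- The factor `deficit / excess` is junk (`0`) at the centre, where `excess = 0`; there it
multiplies only vanishing terms. -/
def lift (hι : (Fintype.card ι : ℝ) * c = 1) (f : Icc 0 c ≃o Icc 0 c) (x : ι → ℝ) : ι → ℝ :=
  fun i => stretch (c_nonneg hι) f (deficit (c_nonneg hι) f x / excess c x) (x i)

variable (hc : 0 ≤ c) (hι : (Fintype.card ι : ℝ) * c = 1) (f g : Icc 0 c ≃o Icc 0 c)
  {x : ι → ℝ}

lemma posPart_le_excess (x : ι → ℝ) (i : ι) : (x i - c)⁺ ≤ excess c x :=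
  Finset.single_le_sum (f := fun j => (x j - c)⁺) (fun _ _ => posPart_nonneg _) (mem_univ i)

lemma posPart_eq_zero_of_excess_eq_zero (h : excess c x = 0) (i : ι) : (x i - c)⁺ = 0 :=
  le_antisymm (h ▸ posPart_le_excess x i) (posPart_nonneg _)

lemma deficit_nonneg (x : ι → ℝ) : 0 ≤ deficit hc f x :=
  Finset.sum_nonneg fun i _ => sub_nonneg.2 (extend_mem hc f (x i)).2

lemma ratio_nonneg (x : ι → ℝ) : 0 ≤ deficit hc f x / excess c x :=
  div_nonneg (deficit_nonneg hc f x) (Finset.sum_nonneg fun _ _ => posPart_nonneg _)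

lemma eq_of_excess_eq_zero (hι : (Fintype.card ι : ℝ) * c = 1) (hx : x ∈ stdSimplex ℝ ι)
    (h : excess c x = 0) (i : ι) : x i = c := by
  have hle : ∀ j ∈ Finset.univ, x j - c ≤ 0 := fun j _ =>
    posPart_eq_zero.1 (posPart_eq_zero_of_excess_eq_zero h j)
  have hsum : ∑ j, (x j - c) = 0 := by
    rw [Finset.sum_sub_distrib, hx.2, Finset.sum_const, card_univ, nsmul_eq_mul, hι, sub_self]
  linarith [(Finset.sum_eq_zero_iff_of_nonpos hle).1 hsum i (mem_univ i)]

lemma div_excess_mul_excess (hι : (Fintype.card ι : ℝ) * c = 1)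
    (hx : x ∈ stdSimplex ℝ ι) : deficit hc f x / excess c x * excess c x = deficit hc f x := by
  by_cases h : excess c x = 0
  · have hcen := eq_of_excess_eq_zero hι hx h
    simp only [h, mul_zero, deficit, hcen, extend_of_right_le hc f le_rfl, sub_self, sum_const_zero]
  · exact div_mul_cancel₀ _ h

lemma sum_stretch (hι : (Fintype.card ι : ℝ) * c = 1) (r : ℝ) (x : ι → ℝ) :
    ∑ i, stretch hc f r (x i) = 1 - deficit hc f x + r * excess c x := by
  simp only [stretch, deficit, excess, Finset.sum_add_distrib, Finset.sum_sub_distrib,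
    ← Finset.mul_sum, Finset.sum_const, card_univ, nsmul_eq_mul]
  linear_combination hι

lemma lift_mem (hx : x ∈ stdSimplex ℝ ι) : lift hι f x ∈ stdSimplex ℝ ι := by
  refine ⟨fun i => add_nonneg (extend_mem _ f _).1
    (mul_nonneg (ratio_nonneg _ f x) (posPart_nonneg _)), ?_⟩
  unfold lift
  rw [sum_stretch _ f hι, div_excess_mul_excess _ f hι hx, sub_add_cancel]

lemma stretch_eq_lift (hx : x ∈ stdSimplex ℝ ι) {r : ℝ}
    (hr : ∑ i, stretch (c_nonneg hι) f r (x i) = 1) :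
    (fun i => stretch (c_nonneg hι) f r (x i)) = lift hι f x := by
  have hmul : r * excess c x = deficit (c_nonneg hι) f x / excess c x * excess c x := by
    rw [div_excess_mul_excess (c_nonneg hι) f hι hx]
    linarith [sum_stretch (c_nonneg hι) f hι r x]
  funext i
  simp only [lift, stretch]
  congr 1
  by_cases h : excess c x = 0
  · rw [posPart_eq_zero_of_excess_eq_zero h i, mul_zero, mul_zero]
  · rw [mul_right_cancel₀ h hmul]

lemma lift_refl (hx : x ∈ stdSimplex ℝ ι) : lift hι (OrderIso.refl (Icc 0 c)) x = x := by
  have hid : (fun i => stretch (c_nonneg hι) (OrderIso.refl (Icc 0 c)) 1 (x i)) = x :=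
    funext fun i => stretch_refl_one (hx.1 i)
  rw [← stretch_eq_lift hι _ hx (by rw [hid]; exact hx.2), hid]

lemma lift_lift (hx : x ∈ stdSimplex ℝ ι) :
    lift hι g (lift hι f x) = lift hι (f.trans g) x := by
  obtain ⟨r, hr⟩ : ∃ r, lift hι g (lift hι f x) =
      fun i => stretch (c_nonneg hι) (f.trans g) r (x i) :=
    ⟨_, funext fun i => stretch_stretch (ratio_nonneg (c_nonneg hι) f x)⟩
  rw [hr]
  exact stretch_eq_lift hι _ hx (hr ▸ (lift_mem hι g (lift_mem hι f hx)).2)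

lemma lift_apply_of_le (i : ι) (h0 : 0 ≤ x i) (hxc : x i ≤ c) :
    lift hι f x i = f ⟨x i, h0, hxc⟩ :=
  (stretch_of_le hxc).trans (extend_of_mem _ f _)

lemma lift_comp_perm (σ : Equiv.Perm ι) (x : ι → ℝ) : lift hι f (x ∘ σ) = lift hι f x ∘ σ := by
  have hE : excess c (x ∘ σ) = excess c x := Equiv.sum_comp σ fun i => (x i - c)⁺
  have hD : deficit (c_nonneg hι) f (x ∘ σ) = deficit (c_nonneg hι) f x :=
    Equiv.sum_comp σ fun i => c - extend (c_nonneg hι) f (x i)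
  funext i
  simp only [lift, hE, hD, comp_apply]

lemma lift_le_lift (x : ι → ℝ) {i j : ι} (hij : x i ≤ x j) : lift hι f x i ≤ lift hι f x j :=
  monotone_stretch (ratio_nonneg _ f x) hij

lemma continuous_deficit : Continuous (deficit hc f : (ι → ℝ) → ℝ) :=
  continuous_finsetSum _ fun i _ =>
    continuous_const.sub ((continuous_extend hc f).comp (continuous_apply i))

lemma continuous_excess : Continuous (excess c : (ι → ℝ) → ℝ) :=
  continuous_finsetSum _ fun i _ =>
    continuous_posPart.comp ((continuous_apply i).sub continuous_const)

lemma ratio_mul_posPart_le_deficit (x : ι → ℝ) (i : ι) :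
    deficit hc f x / excess c x * (x i - c)⁺ ≤ deficit hc f x := by
  by_cases h : excess c x = 0
  · rw [posPart_eq_zero_of_excess_eq_zero h i, mul_zero]
    exact deficit_nonneg hc f x
  · calc deficit hc f x / excess c x * (x i - c)⁺
        ≤ deficit hc f x / excess c x * excess c x :=
          mul_le_mul_of_nonneg_left (posPart_le_excess x i) (ratio_nonneg hc f x)
      _ = deficit hc f x := div_mul_cancel₀ _ h

lemma continuousAt_lift (hx : x ∈ stdSimplex ℝ ι) : ContinuousAt (lift hι f) x := by
  set hc := c_nonneg hι
  refine continuousAt_pi.2 fun i => ?_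
  refine ((continuous_extend hc f).comp (continuous_apply i)).continuousAt.add ?_
  by_cases h : excess c x = 0
  · have hD : deficit hc f x = 0 := by rw [← div_excess_mul_excess hc f hι hx, h, mul_zero]
    unfold ContinuousAt
    beta_reduce
    rw [posPart_eq_zero_of_excess_eq_zero h i, mul_zero]
    refine squeeze_zero (fun y => mul_nonneg (ratio_nonneg hc f y) (posPart_nonneg _))
      (ratio_mul_posPart_le_deficit hc f · i) ?_
    exact hD ▸ (continuous_deficit hc f).continuousAt
  · exact ((continuous_deficit hc f).continuousAt.div (continuous_excess.continuousAt) h).mul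
      (continuous_posPart.comp ((continuous_apply i).sub continuous_const)).continuousAt

lemma continuous_lift_restrict :
    Continuous fun x : stdSimplex ℝ ι => (⟨lift hι f x, lift_mem hι f x.2⟩ : stdSimplex ℝ ι) :=
  (ContinuousOn.domRestrict fun _ hx =>
    (continuousAt_lift hι f hx).continuousWithinAt).subtype_mk _

def lambdaHomeomorph (hι : (Fintype.card ι : ℝ) * c = 1) (f : Icc 0 c ≃o Icc 0 c) :
    stdSimplex ℝ ι ≃ₜ stdSimplex ℝ ι where
  toFun x := ⟨lift hι f x, lift_mem hι f x.2⟩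
  invFun x := ⟨lift hι f.symm x, lift_mem hι f.symm x.2⟩
  left_inv x := Subtype.ext <| (lift_lift hι f f.symm x.2).trans <| by
    rw [f.self_trans_symm, lift_refl hι x.2]
  right_inv x := Subtype.ext <| (lift_lift hι f.symm f x.2).trans <| by
    rw [f.symm_trans_self, lift_refl hι x.2]
  continuous_toFun := continuous_lift_restrict hι f
  continuous_invFun := continuous_lift_restrict hι f.symm

lemma lambdaHomeomorph_trans :
    lambdaHomeomorph hι (f.trans g) = (lambdaHomeomorph hι f).trans (lambdaHomeomorph hι g) :=
  Homeomorph.ext fun x => Subtype.ext (lift_lift hι f g x.2).symm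

lemma lambdaHomeomorph_refl :
    lambdaHomeomorph hι (OrderIso.refl (Icc 0 c)) = Homeomorph.refl _ :=
  Homeomorph.ext fun x => Subtype.ext (lift_refl hι x.2)

lemma exists_mem_stdSimplex_apply_eq [Nontrivial ι] (i : ι) {t : ℝ} (ht : t ∈ Icc (0 : ℝ) 1) :
    ∃ x ∈ stdSimplex ℝ ι, x i = t := by
  classical
  obtain ⟨j, hji⟩ := exists_ne i
  refine ⟨t • Pi.single i 1 + (1 - t) • Pi.single j 1,
    convex_stdSimplex ℝ ι (single_mem_stdSimplex ℝ i) (single_mem_stdSimplex ℝ j) ht.1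
      (sub_nonneg.2 ht.2) (add_sub_cancel t 1), ?_⟩
  simp [hji.symm]

lemma lambdaHomeomorph_injective [Nontrivial ι] : Injective (lambdaHomeomorph (ι := ι) hι) := by
  intro f g hfg
  refine OrderIso.ext (funext fun t => Subtype.ext ?_)
  have hc1 : c ≤ 1 := by
    have : (1 : ℝ) ≤ Fintype.card ι := Nat.one_le_cast.2 Fintype.card_pos
    nlinarith [c_nonneg hι]
  obtain ⟨i, -⟩ := exists_pair_ne ι
  obtain ⟨x, hx, hxt⟩ := exists_mem_stdSimplex_apply_eq i ⟨t.2.1, t.2.2.trans hc1⟩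
  have hxc : x i ≤ c := hxt ▸ t.2.2
  have hfg : lift hι f x i = lift hι g x i :=
    congrFun (congrArg Subtype.val (DFunLike.congr_fun hfg (⟨x, hx⟩ : stdSimplex ℝ ι))) i
  have ht : (⟨x i, hx.1 i, hxc⟩ : Icc 0 c) = t := Subtype.ext hxt
  rwa [lift_apply_of_le hι f i (hx.1 i) hxc, lift_apply_of_le hι g i (hx.1 i) hxc, ht] at hfg

end Simplex

end Comfort

/-- the injective group morphism `Λ_n` from the group of increasing
homeomorphisms of `[0, 1/(n+1)]` (equivalently, order-isomorphisms of the interval)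
into the group of self-homeomorphisms of `Δ_n`, with image inside `COMFORT (Δ_n)`,
acting by `f` on all coordinates `≤ 1/(n+1)`. -/
theorem exists_lambda_embedding (n : ℕ) (hn : 1 ≤ n) :
    ∃ Λ : (Set.Icc (0:ℝ) (1/((n:ℝ)+1)) ≃o Set.Icc (0:ℝ) (1/((n:ℝ)+1))) →
            (Spx (n+1) ≃ₜ Spx (n+1)),
      Function.Injective Λ ∧
      (∀ f g, Λ (f.trans g) = (Λ f).trans (Λ g)) ∧
      Λ (OrderIso.refl _) = Homeomorph.refl _ ∧
      ∀ f, IsComfort (Λ f) ∧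
        ∀ (x : Spx (n+1)) (i : Fin (n+1)) (hx : x.1 i ≤ 1/((n:ℝ)+1)),
          ((Λ f) x).1 i = (f ⟨x.1 i, ⟨x.2.1 i, hx⟩⟩ : ℝ) := by
  have hι : (Fintype.card (Fin (n+1)) : ℝ) * (1/((n:ℝ)+1)) = 1 := by
    rw [Fintype.card_fin, Nat.cast_succ, mul_one_div_cancel (by positivity)]
  have : Nontrivial (Fin (n+1)) := Fin.nontrivial_iff_two_le.2 (by omega)
  refine ⟨Comfort.lambdaHomeomorph hι, Comfort.lambdaHomeomorph_injective hι,
    Comfort.lambdaHomeomorph_trans hι, Comfort.lambdaHomeomorph_refl hι, fun f => ⟨?_, ?_⟩⟩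
  · exact ⟨fun ϑ x => Comfort.lift_comp_perm hι f ϑ x, fun x _ _ => Comfort.lift_le_lift hι f x⟩
  · exact fun x i hx => Comfort.lift_apply_of_le hι f i (x.2.1 i) hx

end
end

section
/- There exists F ∈ COMFORT(Δ_2) with F ≠ id such that F maps Layer_{2,μ} onto Layer_{2,μ} for every μ ∈ [0, 1/3]; consequently, for every increasing homeomorphism f of [0, 1/3] onto itself there exist x ∈ Δ_2 and an index i with x_i ≤ 1/3 and (F(x))_i ≠ f(x_i). In particular, no group embedding Λ_2 of the increasing homeomorphisms of [0, 1/3] into COMFORT(Δ_2) with the property (Λ_2(f)(x))_i = f(x_i) whenever x_i ≤ 1/3 can be surjective onto COMFORT(Δ_2). -/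
open scoped BigOperators

noncomputable section

/-!
On `Layer_{2,a}` the coordinates of a point are `a, v, 1 - a - v` with `v ∈ [a, 1 - 2a]`.
Hence applying one increasing self-map of `[a, 1 - 2a]` that is symmetric about the midpoint
`(1 - a)/2` to every coordinate maps `Layer_{2,a}` onto itself; it fixes the smallest coordinate,
commutes with permutations and keeps the order. Choosing for it an odd cubic perturbation of the
identity about the midpoint, depending continuously on `a`, gives a nontrivial `F ∈ COMFORT(Δ_2)`
preserving every layer. This `F` fixes the coordinate `1/4` of `(1/4, 1/4, 1/2)`, the smallest
one, but moves the coordinate `1/4` of `(0, 1/4, 3/4)`, so no `f` satisfies `F(x)_i = f(x_i)`.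
-/

open Set

/-- With `t = v - (1 - a)/2` and `L = (1 - 3a)/2` this is `v + t (L² - t²)`: an odd perturbation
about the midpoint of `[a, 1 - 2a]` that vanishes at both ends. -/
def warp (a v : ℝ) : ℝ := v + (v - a) * (1 - 2 * a - v) * (2 * v - 1 + a) / 2

lemma warp_self (a : ℝ) : warp a a = a := by
  unfold warp; ring

lemma warp_one_sub_two_mul (a : ℝ) : warp a (1 - 2 * a) = 1 - 2 * a := by
  unfold warp; ring

lemma warp_add_warp_one_sub_sub (a v : ℝ) : warp a v + warp a (1 - a - v) = 1 - a := by
  unfold warp; ring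

lemma continuous_warp : Continuous fun p : ℝ × ℝ => warp p.1 p.2 := by
  unfold warp; fun_prop

lemma warp_strictMonoOn {a : ℝ} (ha : 0 ≤ a) : StrictMonoOn (warp a) (Icc a (1 - 2 * a)) := by
  rintro v ⟨hav, hv⟩ w ⟨haw, hw⟩ hvw
  -- with `s, t` the offsets of `v, w` from the midpoint, the difference quotient is
  -- `1 + L² - (s² + s t + t²) ≥ 1 - 2 L² ≥ 1/2`, because `|s|, |t| ≤ L ≤ 1/2`
  have hdiff : warp a w - warp a v = (w - v) *
      (1 + ((1 - 3 * a) / 2) ^ 2 - ((v - (1 - a) / 2) ^ 2 + (v - (1 - a) / 2) * (w - (1 - a) / 2)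
        + (w - (1 - a) / 2) ^ 2)) := by
    unfold warp; ring
  have hquot : 0 < 1 + ((1 - 3 * a) / 2) ^ 2 - ((v - (1 - a) / 2) ^ 2
      + (v - (1 - a) / 2) * (w - (1 - a) / 2) + (w - (1 - a) / 2) ^ 2) := by
    nlinarith [mul_nonneg (sub_nonneg.2 hav) (sub_nonneg.2 hv),
      mul_nonneg (sub_nonneg.2 haw) (sub_nonneg.2 hw),
      mul_nonneg (sub_nonneg.2 hav) (sub_nonneg.2 hw),
      mul_nonneg (sub_nonneg.2 haw) (sub_nonneg.2 hv)]
  linarith [mul_pos (sub_pos.2 hvw) hquot]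

lemma warp_mem_Icc {a v : ℝ} (ha : 0 ≤ a) (hv : v ∈ Icc a (1 - 2 * a)) :
    warp a v ∈ Icc a (1 - 2 * a) := by
  have hle : a ≤ 1 - 2 * a := hv.1.trans hv.2
  have hmono := (warp_strictMonoOn ha).monotoneOn
  constructor
  · simpa only [warp_self] using hmono ⟨le_rfl, hle⟩ hv hv.1
  · simpa only [warp_one_sub_two_mul] using hmono hv ⟨hle, le_rfl⟩ hv.2

lemma warp_surjOn (a : ℝ) : SurjOn (warp a) (Icc a (1 - 2 * a)) (Icc a (1 - 2 * a)) := by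
  intro y hy
  have hivt : Icc (warp a a) (warp a (1 - 2 * a)) ⊆ warp a '' Icc a (1 - 2 * a) :=
    intermediate_value_Icc (hy.1.trans hy.2)
      (continuous_warp.comp (Continuous.prodMk_right a)).continuousOn
  rw [warp_self, warp_one_sub_two_mul] at hivt
  exact hivt hy

lemma warp_add_warp_eq_iff {a v w : ℝ} (ha : 0 ≤ a) (hv : v ∈ Icc a (1 - 2 * a))
    (hw : w ∈ Icc a (1 - 2 * a)) : warp a v + warp a w = 1 - a ↔ v + w = 1 - a := by
  have hv' : 1 - a - v ∈ Icc a (1 - 2 * a) := ⟨by linarith [hv.2], by linarith [hv.1]⟩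
  have hinj := (warp_strictMonoOn ha).eq_iff_eq hw hv'
  have hsymm := warp_add_warp_one_sub_sub a v
  constructor
  · intro h
    linarith [hinj.1 (by linarith)]
  · intro h
    rw [show w = 1 - a - v by linarith]
    exact hsymm

section MinCoord

variable {n : ℕ} (x : Spx (n+1))

lemma minCoord_le (i : Fin (n+1)) : minCoord x ≤ x.1 i :=
  Finset.inf'_le _ (Finset.mem_univ i)

lemma le_minCoord {c : ℝ} (h : ∀ i, c ≤ x.1 i) : c ≤ minCoord x :=
  Finset.le_inf' _ _ fun i _ => h i

lemma exists_coord_eq_minCoord : ∃ i, x.1 i = minCoord x :=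
  let ⟨i, _, hi⟩ := Finset.exists_mem_eq_inf' Finset.univ_nonempty x.1
  ⟨i, hi.symm⟩

lemma minCoord_eq_of_coord_eq {c : ℝ} (h : ∀ i, c ≤ x.1 i) {i : Fin (n+1)} (hi : x.1 i = c) :
    minCoord x = c :=
  le_antisymm (hi ▸ minCoord_le x i) (le_minCoord x h)

lemma minCoord_nonneg : 0 ≤ minCoord x :=
  le_minCoord x x.2.1

lemma coord_add_mul_minCoord_le (i : Fin (n+1)) : x.1 i + n * minCoord x ≤ 1 := by
  calc x.1 i + n * minCoord x = x.1 i + ∑ _j ∈ Finset.univ.erase i, minCoord x := by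
        simp [Finset.card_erase_of_mem]
    _ ≤ x.1 i + ∑ j ∈ Finset.univ.erase i, x.1 j := by
        gcongr with j; exact minCoord_le x j
    _ = 1 := by rw [Finset.add_sum_erase _ _ (Finset.mem_univ i), x.2.2]

lemma minCoord_perm (ϑ : Equiv.Perm (Fin (n+1))) :
    minCoord (⟨fun i => x.1 (ϑ i), perm_mem ϑ x.2⟩ : Spx (n+1)) = minCoord x := by
  obtain ⟨j, hj⟩ := exists_coord_eq_minCoord x
  exact minCoord_eq_of_coord_eq _ (fun i => minCoord_le x (ϑ i))
    (i := ϑ.symm j) (by simpa using hj)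

lemma continuous_minCoord : Continuous (minCoord : Spx (n+1) → ℝ) :=
  Continuous.finset_inf'_apply _ fun i _ => (continuous_apply i).comp continuous_subtype_val

end MinCoord

instance (k : ℕ) : CompactSpace (Spx k) :=
  isCompact_iff_compactSpace.mp (isCompact_stdSimplex ℝ (Fin k))

lemma coord_mem_Icc (x : Spx 3) (i : Fin 3) :
    x.1 i ∈ Icc (minCoord x) (1 - 2 * minCoord x) := by
  have := coord_add_mul_minCoord_le x i
  push_cast at this
  exact ⟨minCoord_le x i, by linarith⟩

lemma sum_fin_three_eq_rotate {M : Type*} [AddCommMonoid M] (f : Fin 3 → M) (j : Fin 3) :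
    ∑ i, f i = f j + f (j + 1) + f (j + 2) := by
  rw [← Equiv.sum_comp (Equiv.addLeft j), Fin.sum_univ_three]
  simp

lemma sum_warp_eq_one_iff {a : ℝ} (ha : 0 ≤ a) {v : Fin 3 → ℝ}
    (hv : ∀ i, v i ∈ Icc a (1 - 2 * a)) {j : Fin 3} (hj : v j = a) :
    ∑ i, warp a (v i) = 1 ↔ ∑ i, v i = 1 := by
  have hpair := warp_add_warp_eq_iff ha (hv (j + 1)) (hv (j + 2))
  rw [sum_fin_three_eq_rotate _ j, sum_fin_three_eq_rotate v j, hj, warp_self]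
  constructor
  · intro h; linarith [hpair.1 (by linarith)]
  · intro h; linarith [hpair.2 (by linarith)]

lemma warp_minCoord_mem_stdSimplex (x : Spx 3) :
    (fun i => warp (minCoord x) (x.1 i)) ∈ stdSimplex ℝ (Fin 3) := by
  obtain ⟨j, hj⟩ := exists_coord_eq_minCoord x
  have hm := minCoord_nonneg x
  refine ⟨fun i => hm.trans (warp_mem_Icc hm (coord_mem_Icc x i)).1, ?_⟩
  exact (sum_warp_eq_one_iff hm (coord_mem_Icc x) hj).2 x.2.2

def layerMap (x : Spx 3) : Spx 3 :=
  ⟨fun i => warp (minCoord x) (x.1 i), warp_minCoord_mem_stdSimplex x⟩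

lemma minCoord_layerMap (x : Spx 3) : minCoord (layerMap x) = minCoord x := by
  obtain ⟨j, hj⟩ := exists_coord_eq_minCoord x
  refine minCoord_eq_of_coord_eq _ (fun i => ?_) (i := j) ?_
  · exact (warp_mem_Icc (minCoord_nonneg x) (coord_mem_Icc x i)).1
  · simp only [layerMap, hj, warp_self]

lemma layerMap_injective : Function.Injective layerMap := by
  intro x y hxy
  have hm : minCoord x = minCoord y := by
    rw [← minCoord_layerMap x, ← minCoord_layerMap y, hxy]
  refine Subtype.ext (funext fun i => ?_)
  have hi : warp (minCoord x) (x.1 i) = warp (minCoord x) (y.1 i) := by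
    simpa only [layerMap, hm] using congrArg (fun z : Spx 3 => z.1 i) hxy
  refine (warp_strictMonoOn (minCoord_nonneg x)).injOn (coord_mem_Icc x i) ?_ hi
  rw [hm]
  exact coord_mem_Icc y i

lemma layerMap_surjective : Function.Surjective layerMap := by
  intro y
  obtain ⟨a, ha_def⟩ : ∃ a, minCoord y = a := ⟨_, rfl⟩
  have ha : 0 ≤ a := ha_def ▸ minCoord_nonneg y
  have hy : ∀ i, y.1 i ∈ Icc a (1 - 2 * a) := ha_def ▸ coord_mem_Icc y
  choose v hv hvy using fun i => warp_surjOn a (hy i)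
  obtain ⟨j, hj⟩ := exists_coord_eq_minCoord y
  have hvj : v j = a :=
    (warp_strictMonoOn ha).injOn (hv j) ⟨le_rfl, (hv j).1.trans (hv j).2⟩
      (by rw [hvy, hj, ha_def, warp_self])
  have hsum : ∑ i, v i = 1 :=
    (sum_warp_eq_one_iff ha hv hvj).1 (by simp only [hvy]; exact y.2.2)
  let x : Spx 3 := ⟨v, fun i => ha.trans (hv i).1, hsum⟩
  have hx : minCoord x = a := minCoord_eq_of_coord_eq x (fun i => (hv i).1) hvj
  refine ⟨x, Subtype.ext (funext fun i => ?_)⟩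
  simp only [layerMap, hx]
  exact hvy i

lemma continuous_layerMap : Continuous layerMap :=
  Continuous.subtype_mk (continuous_pi fun i => continuous_warp.comp
    (continuous_minCoord.prodMk ((continuous_apply i).comp continuous_subtype_val))) _

def layerHomeo : Spx 3 ≃ₜ Spx 3 :=
  continuous_layerMap.homeoOfEquivCompactToT2
    (f := Equiv.ofBijective layerMap ⟨layerMap_injective, layerMap_surjective⟩)

lemma layerHomeo_apply (x : Spx 3) (i : Fin 3) :
    (layerHomeo x).1 i = warp (minCoord x) (x.1 i) := rfl

lemma isComfort_layerHomeo : IsComfort layerHomeo where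
  perm ϑ x := by
    funext i
    exact congrArg (warp · _) (minCoord_perm x ϑ)
  mono x i j hij :=
    (warp_strictMonoOn (minCoord_nonneg x)).monotoneOn (coord_mem_Icc x i) (coord_mem_Icc x j) hij

lemma layerHomeo_image_layer (μ : ℝ) : layerHomeo '' layer 2 μ = layer 2 μ := by
  have hpre : layerHomeo ⁻¹' layer 2 μ = layer 2 μ := by
    ext x
    show minCoord (layerMap x) = μ ↔ minCoord x = μ
    rw [minCoord_layerMap]
  rw [← hpre, Set.image_preimage_eq _ layerHomeo.surjective, hpre]

def movedPoint : Spx 3 := ⟨![0, 1/4, 3/4], fun i => by fin_cases i <;> norm_num, by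
  simp [Fin.sum_univ_three]; norm_num⟩

def fixedPoint : Spx 3 := ⟨![1/4, 1/4, 1/2], fun i => by fin_cases i <;> norm_num, by
  simp [Fin.sum_univ_three]; norm_num⟩

lemma layerHomeo_movedPoint : (layerHomeo movedPoint).1 1 = 13/64 := by
  have hm : minCoord movedPoint = 0 :=
    minCoord_eq_of_coord_eq _ (fun i => movedPoint.2.1 i) (i := 0) rfl
  rw [layerHomeo_apply, hm]
  norm_num [movedPoint, warp]

lemma layerHomeo_fixedPoint : (layerHomeo fixedPoint).1 0 = 1/4 := by
  have hm : minCoord fixedPoint = 1/4 :=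
    minCoord_eq_of_coord_eq _ (fun i => by fin_cases i <;> norm_num [fixedPoint]) (i := 0) rfl
  rw [layerHomeo_apply, hm]
  exact warp_self _

lemma layerHomeo_ne_refl : layerHomeo ≠ Homeomorph.refl (Spx 3) := by
  intro h
  have h1 := layerHomeo_movedPoint
  rw [h] at h1
  norm_num [movedPoint] at h1

lemma exists_layerHomeo_coord_ne (f : Icc (0:ℝ) (1/3) ≃o Icc (0:ℝ) (1/3)) :
    ∃ (x : Spx 3) (i : Fin 3) (hx : x.1 i ≤ 1/3),
      (layerHomeo x).1 i ≠ (f ⟨x.1 i, ⟨x.2.1 i, hx⟩⟩ : ℝ) := by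
  by_cases hf : (f ⟨1/4, by norm_num⟩ : ℝ) = 1/4
  · refine ⟨movedPoint, 1, by norm_num [movedPoint], ?_⟩
    change (layerHomeo movedPoint).1 1 ≠ f ⟨1/4, by norm_num⟩
    rw [layerHomeo_movedPoint, hf]
    norm_num
  · refine ⟨fixedPoint, 0, by norm_num [fixedPoint], ?_⟩
    change (layerHomeo fixedPoint).1 0 ≠ f ⟨1/4, by norm_num⟩
    rw [layerHomeo_fixedPoint]
    exact Ne.symm hf

/-- a nontrivial element of `COMFORT (Δ_2)` preserving every layer;
consequently it is not of the form `Λ_2 (f)`, so no embedding `Λ_2` as in the paper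
can be surjective onto `COMFORT (Δ_2)`. -/
theorem exists_comfort_not_in_lambda_image :
    ∃ F : Spx (2+1) ≃ₜ Spx (2+1),
      IsComfort F ∧
      F ≠ Homeomorph.refl (Spx (2+1)) ∧
      (∀ μ : ℝ, 0 ≤ μ → μ ≤ 1/3 → ⇑F '' layer 2 μ = layer 2 μ) ∧
      (∀ f : Set.Icc (0:ℝ) (1/3) ≃o Set.Icc (0:ℝ) (1/3),
        ∃ (x : Spx (2+1)) (i : Fin (2+1)) (hx : x.1 i ≤ 1/3),
          (F x).1 i ≠ (f ⟨x.1 i, ⟨x.2.1 i, hx⟩⟩ : ℝ)) ∧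
      (∀ Λ : (Set.Icc (0:ℝ) (1/3) ≃o Set.Icc (0:ℝ) (1/3)) → (Spx (2+1) ≃ₜ Spx (2+1)),
        Function.Injective Λ →
        (∀ f (x : Spx (2+1)) (i : Fin (2+1)) (hx : x.1 i ≤ 1/3),
          ((Λ f) x).1 i = (f ⟨x.1 i, ⟨x.2.1 i, hx⟩⟩ : ℝ)) →
        ¬ (∀ G : Spx (2+1) ≃ₜ Spx (2+1), IsComfort G → ∃ f, Λ f = G)) := by
  refine ⟨layerHomeo, isComfort_layerHomeo, layerHomeo_ne_refl,
    fun μ _ _ => layerHomeo_image_layer μ, exists_layerHomeo_coord_ne, ?_⟩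
  intro Λ _ hΛ hsurj
  obtain ⟨f, hf⟩ := hsurj layerHomeo isComfort_layerHomeo
  obtain ⟨x, i, hx, hne⟩ := exists_layerHomeo_coord_ne f
  exact hne (hf ▸ hΛ f x i hx)

end
end
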